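/- arXiv:math/9712210 — 4 statements merged into one kernel-verified Lean document; each statement's English description precedes it below -/
import Mathlib

section
/- Let φ and ψ be isometries of an ℝ-tree T onto itself, both hyperbolic (ℓ(φ) > 0 and ℓ(ψ) > 0), and for a hyperbolic isometry σ write Axis(σ) = {x ∈ T : d(x, σ(x)) = ℓ(σ)}. Suppose Axis(φ) and Axis(ψ) are disjoint. Then ψ ∘ φ is hyperbolic with ℓ(ψ ∘ φ) = ℓ(φ) + ℓ(ψ) + 2·D, where D = inf{ d(x,y) : x ∈ Axis(φ), y ∈ Axis(ψ) }, and moreover Axis(ψ ∘ φ) intersects both Axis(φ) and Axis(ψ). -/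
/-- An *arc* from `x` to `y` in a metric space: the image of a topological embedding of a
closed real interval `[a,b]` (with `a = b` allowed) sending `a` to `x` and `b` to `y`.
Since `[a,b]` is compact and a metric space is Hausdorff, a topological embedding is the
same as a continuous injective map. -/
def IsArcIn {T : Type*} [MetricSpace T] (x y : T) (S : Set T) : Prop :=
  ∃ a b : ℝ, a ≤ b ∧ ∃ α : ℝ → T,
    ContinuousOn α (Set.Icc a b) ∧ Set.InjOn α (Set.Icc a b) ∧
    α '' Set.Icc a b = S ∧ α a = x ∧ α b = y

/-- A *geodesic segment* from `x` to `y`: the image of an isometric embedding of a closed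
real interval sending the endpoints to `x` and `y`. -/
def IsGeodesicSegmentIn {T : Type*} [MetricSpace T] (x y : T) (S : Set T) : Prop :=
  ∃ a b : ℝ, a ≤ b ∧ ∃ α : ℝ → T,
    (∀ s ∈ Set.Icc a b, ∀ t ∈ Set.Icc a b, dist (α s) (α t) = |s - t|) ∧
    α '' Set.Icc a b = S ∧ α a = x ∧ α b = y

/-- An ℝ-tree: a metric space in which any two points are joined by a unique arc,
and this arc is a geodesic segment. -/
def IsRTree (T : Type*) [MetricSpace T] : Prop :=
  ∀ x y : T, (∃! S : Set T, IsArcIn x y S) ∧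
    ∀ S : Set T, IsArcIn x y S → IsGeodesicSegmentIn x y S

/-- The Gromov product `(x·y)_w = (d(w,x) + d(w,y) − d(x,y))/2`. -/
noncomputable def gromovProd {T : Type*} [MetricSpace T] (w x y : T) : ℝ :=
  (dist w x + dist w y - dist x y) / 2

/-- The translation length `ℓ(φ) = inf_{x ∈ T} d(x, φ(x))` of a self-map of a metric space. -/
noncomputable def translationLength {T : Type*} [MetricSpace T] (φ : T → T) : ℝ :=
  ⨅ x : T, dist x (φ x)

namespace RTreeAux

open Set

variable {T : Type*} [MetricSpace T]

/-- `y` lies (metrically) between `x` and `z`. -/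
def Btwn (x y z : T) : Prop := dist x y + dist y z = dist x z

lemma btw_rev {x y z : T} (hb : Btwn x y z) : Btwn z y x := by
  unfold Btwn at *
  rw [dist_comm z y, dist_comm y x, dist_comm z x]
  linarith

lemma btw_self_left (x z : T) : Btwn x x z := by simp [Btwn]

lemma btw_self_right (x z : T) : Btwn x z z := by simp [Btwn]

lemma btw_map {x y z : T} (f : T → T) (hf : ∀ a b : T, dist (f a) (f b) = dist a b)
    (hb : Btwn x y z) : Btwn (f x) (f y) (f z) := by
  unfold Btwn at *
  rw [hf, hf, hf]
  exact hb

lemma btw_antisymm {x y z : T} (h1 : Btwn x y z) (h2 : Btwn x z y) : y = z := by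
  unfold Btwn at *
  have : dist y z = 0 := by rw [dist_comm z y] at h2; linarith
  exact eq_of_dist_eq_zero this

/-- Extend a betweenness relation past the right endpoint. -/
lemma btw_extend {a u b b' : T} (h1 : Btwn a u b) (h2 : Btwn a b b') : Btwn a u b' := by
  unfold Btwn at *
  have t1 : dist u b' ≤ dist u b + dist b b' := dist_triangle _ _ _
  have t2 : dist a b' ≤ dist a u + dist u b' := dist_triangle _ _ _
  have : dist u b' = dist u b + dist b b' := by linarith
  linarith

/-- Extend a betweenness relation past the left endpoint. -/
lemma btw_extend_left {a b z w : T} (h1 : Btwn a b w) (h2 : Btwn b z w) : Btwn a z w := by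
  unfold Btwn at *
  have t1 : dist a z ≤ dist a b + dist b z := dist_triangle _ _ _
  have t2 : dist a w ≤ dist a z + dist z w := dist_triangle _ _ _
  linarith

/-- Branch additivity at a median point: if `c` is a median of `x, y, z`, `u` lies between
`x` and `c`, and `v` lies between `z` and `c`, then `d(u,v) = d(u,c) + d(c,v)`. -/
lemma branch_add {x y z c u v : T} (h1 : Btwn x c y) (h2 : Btwn x c z) (h3 : Btwn y c z)
    (hu : Btwn x u c) (hv : Btwn z v c) : dist u v = dist u c + dist c v := by
  unfold Btwn at *
  have t1 : dist x z ≤ dist x u + dist u v + dist v z := dist_triangle4 _ _ _ _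
  have t2 : dist u v ≤ dist u c + dist c v := by
    have := dist_triangle u c v
    linarith
  have e1 : dist v z = dist z v := dist_comm _ _
  have e2 : dist v c = dist c v := dist_comm _ _
  have e3 : dist c z = dist z c := dist_comm _ _
  linarith

lemma lip_continuousOn {α : ℝ → T} {s : Set ℝ}
    (H : ∀ u ∈ s, ∀ v ∈ s, dist (α u) (α v) ≤ |u - v|) : ContinuousOn α s := by
  have : LipschitzOnWith 1 α s := by
    rw [lipschitzOnWith_iff_dist_le_mul]
    intro u hu v hv
    rw [Real.dist_eq]
    simpa using H u hu v hv
  exact this.continuousOn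

lemma arc_of_iso {α : ℝ → T} {a b : ℝ} (hab : a ≤ b)
    (hiso : ∀ s ∈ Icc a b, ∀ t ∈ Icc a b, dist (α s) (α t) = |s - t|) :
    IsArcIn (α a) (α b) (α '' Icc a b) := by
  refine ⟨a, b, hab, α, lip_continuousOn (fun u hu v hv => le_of_eq (hiso u hu v hv)),
    ?_, rfl, rfl, rfl⟩
  intro u hu v hv huv
  have h0 := hiso u hu v hv
  rw [huv, dist_self] at h0
  have := abs_eq_zero.mp h0.symm
  linarith [this]

/-- From an `s ≤ t` version of the isometry property to the general one. -/
lemma iso_of_le {α : ℝ → T} {a b : ℝ}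
    (H : ∀ s ∈ Icc a b, ∀ t ∈ Icc a b, s ≤ t → dist (α s) (α t) = t - s) :
    ∀ s ∈ Icc a b, ∀ t ∈ Icc a b, dist (α s) (α t) = |s - t| := by
  intro s hs t ht
  rcases le_total s t with hle | hle
  · rw [H s hs t ht hle, abs_of_nonpos (by linarith), neg_sub]
  · rw [dist_comm, H t ht s hs hle, abs_of_nonneg (by linarith)]

/-- Basic geodesic parametrization of the unique arc between two points, together with
uniqueness of arcs. -/
lemma geod0 (h : IsRTree T) (x y : T) :
    ∃ α : ℝ → T,
      (∀ s ∈ Icc 0 (dist x y), ∀ t ∈ Icc 0 (dist x y), dist (α s) (α t) = |s - t|) ∧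
      α 0 = x ∧ α (dist x y) = y ∧
      (∀ S : Set T, IsArcIn x y S → S = α '' Icc 0 (dist x y)) := by
  obtain ⟨hexu, hgeo⟩ := h x y
  obtain ⟨S₀, hS₀⟩ := hexu.exists
  obtain ⟨a, b, hab, α₀, hiso₀, himg, ha, hb⟩ := hgeo S₀ hS₀
  have hmema : a ∈ Icc a b := ⟨le_refl a, hab⟩
  have hmemb : b ∈ Icc a b := ⟨hab, le_refl b⟩
  have hd : dist x y = b - a := by
    have := hiso₀ a hmema b hmemb
    rw [ha, hb] at this
    rw [this, abs_of_nonpos (by linarith), neg_sub]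
  set d := dist x y with hd'
  set α : ℝ → T := fun t => α₀ (a + t) with hα
  have hmem : ∀ t ∈ Icc (0:ℝ) d, a + t ∈ Icc a b := by
    intro t ht
    constructor <;> [linarith [ht.1]; linarith [ht.2, hd]]
  have hiso : ∀ s ∈ Icc (0:ℝ) d, ∀ t ∈ Icc (0:ℝ) d, dist (α s) (α t) = |s - t| := by
    intro s hs t ht
    have := hiso₀ _ (hmem s hs) _ (hmem t ht)
    simpa using this
  have himg' : α '' Icc 0 d = S₀ := by
    rw [← himg]
    ext z
    constructor
    · rintro ⟨t, ht, rfl⟩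
      exact ⟨a + t, hmem t ht, rfl⟩
    · rintro ⟨u, hu, rfl⟩
      exact ⟨u - a, ⟨by linarith [hu.1], by rw [hd]; linarith [hu.2]⟩, by simp [hα]⟩
  refine ⟨α, hiso, by simpa [hα] using ha, ?_, ?_⟩
  · show α₀ (a + d) = y
    rw [hd]
    convert hb using 2
    ring
  · intro S hS
    rw [hexu.unique hS hS₀, himg']

/-- Any point between `x` and `y` lies on the geodesic parametrization. -/
lemma geod_mem (h : IsRTree T) (x y : T) {α : ℝ → T}
    (hiso : ∀ s ∈ Icc 0 (dist x y), ∀ t ∈ Icc 0 (dist x y), dist (α s) (α t) = |s - t|)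
    (h0 : α 0 = x) (h1 : α (dist x y) = y)
    (huniq : ∀ S : Set T, IsArcIn x y S → S = α '' Icc 0 (dist x y))
    {z : T} (hz : Btwn x z y) : ∃ t ∈ Icc 0 (dist x y), α t = z := by
  classical
  obtain ⟨α₁, hiso₁, h10, h11, _⟩ := geod0 h x z
  obtain ⟨α₂, hiso₂, h20, h21, _⟩ := geod0 h z y
  set d1 := dist x z with hd1
  set d2 := dist z y with hd2
  set d := dist x y with hd
  have hsum : d1 + d2 = d := hz
  have hd1n : 0 ≤ d1 := dist_nonneg
  have hd2n : 0 ≤ d2 := dist_nonneg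
  set β : ℝ → T := fun t => if t ≤ d1 then α₁ t else α₂ (t - d1) with hβ
  have hβiso' : ∀ s ∈ Icc (0:ℝ) d, ∀ t ∈ Icc (0:ℝ) d, s ≤ t → dist (β s) (β t) = t - s := by
    intro s hs t ht hst
    by_cases h1t : t ≤ d1
    · have h1s : s ≤ d1 := le_trans hst h1t
      have : dist (α₁ s) (α₁ t) = |s - t| := hiso₁ s ⟨hs.1, h1s⟩ t ⟨ht.1, h1t⟩
      simp only [hβ, if_pos h1s, if_pos h1t]
      rw [this, abs_of_nonpos (by linarith), neg_sub]
    · push_neg at h1t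
      by_cases h1s : s ≤ d1
      · -- cross case
        simp only [hβ, if_pos h1s, if_neg (not_le.mpr h1t)]
        have htmem : t - d1 ∈ Icc (0:ℝ) d2 := ⟨by linarith, by linarith [ht.2]⟩
        have h0mem : (0:ℝ) ∈ Icc (0:ℝ) d2 := ⟨le_refl 0, hd2n⟩
        have hd2mem : d2 ∈ Icc (0:ℝ) d2 := ⟨hd2n, le_refl d2⟩
        have hsmem : s ∈ Icc (0:ℝ) d1 := ⟨hs.1, h1s⟩
        have h0mem1 : (0:ℝ) ∈ Icc (0:ℝ) d1 := ⟨le_refl 0, hd1n⟩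
        have hd1mem : d1 ∈ Icc (0:ℝ) d1 := ⟨hd1n, le_refl d1⟩
        have e1 : dist (α₁ s) z = d1 - s := by
          have := hiso₁ s hsmem d1 hd1mem
          rw [h11] at this
          rw [this, abs_of_nonpos (by linarith), neg_sub]
        have e2 : dist z (α₂ (t - d1)) = t - d1 := by
          have := hiso₂ 0 h0mem (t - d1) htmem
          rw [h20] at this
          rw [this, abs_of_nonpos (by linarith), neg_sub, sub_zero]
        have e3 : dist (α₂ (t - d1)) y = d2 - (t - d1) := by
          have := hiso₂ (t - d1) htmem d2 hd2mem
          rw [h21] at this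
          rw [this, abs_of_nonpos (by linarith [ht.2]), neg_sub]
        have e4 : dist x (α₁ s) = s := by
          have := hiso₁ 0 h0mem1 s hsmem
          rw [h10] at this
          rw [this, abs_of_nonpos (by linarith [hs.1]), neg_sub, sub_zero]
        have tle : dist (α₁ s) (α₂ (t - d1)) ≤ t - s := by
          have := dist_triangle (α₁ s) z (α₂ (t - d1))
          rw [e1, e2] at this
          linarith
        have tge : t - s ≤ dist (α₁ s) (α₂ (t - d1)) := by
          have t1 : dist x y ≤ dist x (α₂ (t - d1)) + dist (α₂ (t - d1)) y :=
            dist_triangle _ _ _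
          have t2 : dist x (α₂ (t - d1)) ≤ dist x (α₁ s) + dist (α₁ s) (α₂ (t - d1)) :=
            dist_triangle _ _ _
          rw [e3] at t1
          rw [e4] at t2
          have : d1 + (t - d1) ≤ dist x (α₂ (t - d1)) := by linarith
          linarith
        linarith
      · push_neg at h1s
        simp only [hβ, if_neg (not_le.mpr h1s), if_neg (not_le.mpr h1t)]
        have hsmem : s - d1 ∈ Icc (0:ℝ) d2 := ⟨by linarith, by linarith [hs.2]⟩
        have htmem : t - d1 ∈ Icc (0:ℝ) d2 := ⟨by linarith, by linarith [ht.2]⟩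
        have := hiso₂ (s - d1) hsmem (t - d1) htmem
        rw [this, abs_of_nonpos (by linarith), neg_sub]
        ring
  have hβiso := iso_of_le hβiso'
  have hβ0 : β 0 = x := by
    simp only [hβ, if_pos hd1n]
    exact h10
  have hβd : β d = y := by
    by_cases hc : d ≤ d1
    · have hd20 : d2 = 0 := by linarith
      have hzy : z = y := by
        have : dist z y = 0 := hd20
        exact eq_of_dist_eq_zero this
      simp only [hβ, if_pos hc]
      have : d = d1 := by linarith
      rw [this, h11, hzy]
    · push_neg at hc
      simp only [hβ, if_neg (not_le.mpr hc)]
      have : d - d1 = d2 := by linarith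
      rw [this, h21]
  have hdn : (0:ℝ) ≤ d := dist_nonneg
  have harc : IsArcIn x y (β '' Icc 0 d) := by
    have := arc_of_iso hdn hβiso
    rwa [hβ0, hβd] at this
  have him := huniq _ harc
  have hzmem : z ∈ β '' Icc 0 d := by
    refine ⟨d1, ⟨hd1n, by linarith⟩, ?_⟩
    simp only [hβ, if_pos (le_refl d1)]
    exact h11
  rw [him] at hzmem
  obtain ⟨t, ht, htz⟩ := hzmem
  exact ⟨t, ht, htz⟩

/-- Comparability of two points lying between `x` and `y`. -/
lemma btw_total (h : IsRTree T) {x y z z' : T} (h1 : Btwn x z y) (h2 : Btwn x z' y) :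
    Btwn x z z' ∨ Btwn x z' z := by
  obtain ⟨α, hiso, h0, hd, huniq⟩ := geod0 h x y
  obtain ⟨s, hs, hsz⟩ := geod_mem h x y hiso h0 hd huniq h1
  obtain ⟨t, ht, htz⟩ := geod_mem h x y hiso h0 hd huniq h2
  have h0mem : (0:ℝ) ∈ Icc 0 (dist x y) := ⟨le_refl 0, dist_nonneg⟩
  have exs : dist x z = s := by
    have := hiso 0 h0mem s hs
    rw [h0, hsz] at this
    rw [this, abs_of_nonpos (by linarith [hs.1]), neg_sub, sub_zero]
  have ext' : dist x z' = t := by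
    have := hiso 0 h0mem t ht
    rw [h0, htz] at this
    rw [this, abs_of_nonpos (by linarith [ht.1]), neg_sub, sub_zero]
  have exst : dist z z' = |s - t| := by
    have := hiso s hs t ht
    rw [hsz, htz] at this
    exact this
  rcases le_total s t with hle | hle
  · left
    unfold Btwn
    rw [exs, ext', exst, abs_of_nonpos (by linarith), neg_sub]
    ring
  · right
    unfold Btwn
    rw [ext', exs, dist_comm z' z, exst, abs_of_nonneg (by linarith)]
    ring

/-- Interpolation: if `z, z'` both lie between `u` and `w` with `d(u,z) ≤ d(u,z')`,
then `z` lies between `u` and `z'` and `z'` between `z` and `w`. -/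
lemma btw_interp (h : IsRTree T) {u w z z' : T} (hz : Btwn u z w) (hz' : Btwn u z' w)
    (hle : dist u z ≤ dist u z') :
    Btwn u z z' ∧ Btwn z z' w ∧ dist z z' = dist u z' - dist u z := by
  rcases btw_total h hz hz' with hc | hc
  · have e1 : dist z z' = dist u z' - dist u z := by
      have := hc
      unfold Btwn at this
      linarith
    refine ⟨hc, ?_, e1⟩
    unfold Btwn at *
    linarith
  · have : dist z' z = 0 := by
      unfold Btwn at hc
      linarith [dist_nonneg (x := z') (y := z)]
    have hzz : z' = z := eq_of_dist_eq_zero this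
    subst hzz
    refine ⟨by simpa using btw_self_right u z', by simpa using btw_self_left z' w, by simp⟩

/-- Existence of medians in an ℝ-tree. -/
lemma median_exists (h : IsRTree T) (x y z : T) :
    ∃ m : T, Btwn x m y ∧ Btwn x m z ∧ Btwn y m z := by
  classical
  obtain ⟨f, hf, hf0, hfd, hfu⟩ := geod0 h x y
  obtain ⟨g, hg, hg0, hgd, hgu⟩ := geod0 h x z
  set d1 := dist x y with hd1
  set d2 := dist x z with hd2
  have hd1n : (0:ℝ) ≤ d1 := dist_nonneg
  have hd2n : (0:ℝ) ≤ d2 := dist_nonneg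
  set A : Set ℝ := {t | t ∈ Icc (0:ℝ) (min d1 d2) ∧ f t = g t} with hA
  have h0A : (0:ℝ) ∈ A := ⟨⟨le_refl 0, le_min hd1n hd2n⟩, by rw [hf0, hg0]⟩
  have hbdd : BddAbove A := ⟨min d1 d2, fun t ht => ht.1.2⟩
  set t₀ := sSup A with ht₀
  have ht₀0 : 0 ≤ t₀ := le_csSup hbdd h0A
  have ht₀ub : t₀ ≤ min d1 d2 := csSup_le ⟨0, h0A⟩ (fun t ht => ht.1.2)
  have ht₀1 : t₀ ∈ Icc (0:ℝ) d1 := ⟨ht₀0, le_trans ht₀ub (min_le_left _ _)⟩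
  have ht₀2 : t₀ ∈ Icc (0:ℝ) d2 := ⟨ht₀0, le_trans ht₀ub (min_le_right _ _)⟩
  have hft₀ : f t₀ = g t₀ := by
    by_contra hne
    have hpos : 0 < dist (f t₀) (g t₀) := dist_pos.mpr hne
    obtain ⟨s, hsA, hs⟩ := exists_lt_of_lt_csSup ⟨0, h0A⟩
      (show t₀ - dist (f t₀) (g t₀) / 4 < t₀ by linarith)
    have hst₀ : s ≤ t₀ := le_csSup hbdd hsA
    have hs1 : s ∈ Icc (0:ℝ) d1 := ⟨hsA.1.1, le_trans hsA.1.2 (min_le_left _ _)⟩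
    have hs2 : s ∈ Icc (0:ℝ) d2 := ⟨hsA.1.1, le_trans hsA.1.2 (min_le_right _ _)⟩
    have e1 : dist (f t₀) (f s) = t₀ - s := by
      rw [hf t₀ ht₀1 s hs1, abs_of_nonneg (by linarith)]
    have e2 : dist (g s) (g t₀) = t₀ - s := by
      rw [hg s hs2 t₀ ht₀2, abs_of_nonpos (by linarith), neg_sub]
    have := dist_triangle4 (f t₀) (f s) (g s) (g t₀)
    rw [e1, hsA.2, dist_self] at this
    rw [e2] at this
    linarith
  have h0mem1 : (0:ℝ) ∈ Icc (0:ℝ) d1 := ⟨le_refl 0, hd1n⟩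
  have hd1mem : d1 ∈ Icc (0:ℝ) d1 := ⟨hd1n, le_refl d1⟩
  have h0mem2 : (0:ℝ) ∈ Icc (0:ℝ) d2 := ⟨le_refl 0, hd2n⟩
  have hd2mem : d2 ∈ Icc (0:ℝ) d2 := ⟨hd2n, le_refl d2⟩
  have exm : dist x (f t₀) = t₀ := by
    have h' := hf 0 h0mem1 t₀ ht₀1
    rw [hf0] at h'
    rw [h', abs_of_nonpos (by linarith), neg_sub, sub_zero]
  have emy : dist (f t₀) y = d1 - t₀ := by
    have h' := hf t₀ ht₀1 d1 hd1mem
    rw [hfd] at h'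
    rw [h', abs_of_nonpos (by linarith [ht₀1.2]), neg_sub]
  have emz : dist (f t₀) z = d2 - t₀ := by
    have h' := hg t₀ ht₀2 d2 hd2mem
    rw [hgd, ← hft₀] at h'
    rw [h', abs_of_nonpos (by linarith [ht₀2.2]), neg_sub]
  have hbxy : Btwn x (f t₀) y := by unfold Btwn; rw [exm, emy]; ring
  have hbxz : Btwn x (f t₀) z := by unfold Btwn; rw [exm, emz]; ring
  refine ⟨f t₀, hbxy, hbxz, ?_⟩
  -- the hard part: Btwn y (f t₀) z
  set e1 := d1 - t₀ with he1
  set e2 := d2 - t₀ with he2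
  have he1n : 0 ≤ e1 := by rw [he1]; linarith [ht₀1.2]
  have he2n : 0 ≤ e2 := by rw [he2]; linarith [ht₀2.2]
  set γ : ℝ → T := fun u => if u ≤ e1 then f (d1 - u) else g (t₀ + (u - e1)) with hγ
  have hmemf : ∀ u ∈ Icc (0:ℝ) (e1 + e2), u ≤ e1 → d1 - u ∈ Icc (0:ℝ) d1 := by
    intro u hu hue
    constructor
    · rw [he1] at hue; linarith
    · linarith [hu.1]
  have hmemg : ∀ u ∈ Icc (0:ℝ) (e1 + e2), e1 ≤ u → t₀ + (u - e1) ∈ Icc (0:ℝ) d2 := by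
    intro u hu hue
    constructor
    · linarith
    · have := hu.2; rw [he2] at *; linarith
  -- distances from x along γ
  have hdistx : ∀ u ∈ Icc (0:ℝ) (e1 + e2), dist x (γ u) =
      if u ≤ e1 then d1 - u else t₀ + (u - e1) := by
    intro u hu
    by_cases hue : u ≤ e1
    · simp only [hγ, if_pos hue]
      have h' := hf 0 h0mem1 (d1 - u) (hmemf u hu hue)
      rw [hf0] at h'
      rw [h', abs_of_nonpos (by linarith [(hmemf u hu hue).1]), neg_sub, sub_zero]
    · push_neg at hue
      simp only [hγ, if_neg (not_le.mpr hue)]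
      have h' := hg 0 h0mem2 (t₀ + (u - e1)) (hmemg u hu (le_of_lt hue))
      rw [hg0] at h'
      rw [h', abs_of_nonpos (by linarith [(hmemg u hu (le_of_lt hue)).1]), neg_sub, sub_zero]
  have hγm : γ e1 = f t₀ := by
    simp only [hγ, if_pos (le_refl e1)]
    congr 1
    rw [he1]; ring
  have hlip : ∀ u ∈ Icc (0:ℝ) (e1 + e2), ∀ v ∈ Icc (0:ℝ) (e1 + e2), u ≤ v →
      dist (γ u) (γ v) ≤ v - u := by
    intro u hu v hv huv
    by_cases hve : v ≤ e1
    · have hue : u ≤ e1 := le_trans huv hve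
      simp only [hγ, if_pos hue, if_pos hve]
      rw [hf (d1 - u) (hmemf u hu hue) (d1 - v) (hmemf v hv hve)]
      rw [abs_of_nonneg (by linarith)]
      linarith
    · push_neg at hve
      by_cases hue : u ≤ e1
      · simp only [hγ, if_pos hue, if_neg (not_le.mpr hve)]
        have c1 : dist (f (d1 - u)) (f t₀) = e1 - u := by
          have h' := hf (d1 - u) (hmemf u hu hue) t₀ ht₀1
          rw [h', abs_of_nonneg (by rw [he1] at hue; linarith)]
          rw [he1]; ring
        have c2 : dist (f t₀) (g (t₀ + (v - e1))) = v - e1 := by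
          have h' := hg t₀ ht₀2 (t₀ + (v - e1)) (hmemg v hv (le_of_lt hve))
          rw [← hft₀] at h'
          rw [h', abs_of_nonpos (by linarith), neg_sub]
          ring
        have := dist_triangle (f (d1 - u)) (f t₀) (g (t₀ + (v - e1)))
        rw [c1, c2] at this
        linarith
      · push_neg at hue
        simp only [hγ, if_neg (not_le.mpr hue), if_neg (not_le.mpr hve)]
        rw [hg (t₀ + (u - e1)) (hmemg u hu (le_of_lt hue)) (t₀ + (v - e1))
          (hmemg v hv (le_of_lt hve))]
        rw [abs_of_nonpos (by linarith), neg_sub]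
        linarith
  have hlip' : ∀ u ∈ Icc (0:ℝ) (e1 + e2), ∀ v ∈ Icc (0:ℝ) (e1 + e2),
      dist (γ u) (γ v) ≤ |u - v| := by
    intro u hu v hv
    rcases le_total u v with hle | hle
    · rw [abs_of_nonpos (by linarith), neg_sub]
      exact hlip u hu v hv hle
    · rw [abs_of_nonneg (by linarith), dist_comm]
      exact hlip v hv u hu hle
  have hinj : Set.InjOn γ (Icc 0 (e1 + e2)) := by
    have key : ∀ u ∈ Icc (0:ℝ) (e1 + e2), ∀ v ∈ Icc (0:ℝ) (e1 + e2), u ≤ v →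
        γ u = γ v → u = v := by
      intro u hu v hv huv heq
      by_cases hve : v ≤ e1
      · have hue : u ≤ e1 := le_trans huv hve
        have h1 := hdistx u hu
        have h2 := hdistx v hv
        rw [if_pos hue] at h1
        rw [if_pos hve] at h2
        rw [heq, h2] at h1
        linarith
      · push_neg at hve
        by_cases hue : u ≤ e1
        · -- cross case: impossible
          exfalso
          have h1 := hdistx u hu
          have h2 := hdistx v hv
          rw [if_pos hue] at h1
          rw [if_neg (not_le.mpr hve)] at h2
          rw [heq, h2] at h1
          -- h1 : t₀ + (v - e1) = d1 - u
          have hs'mem : t₀ + (v - e1) ∈ A := by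
            refine ⟨⟨by linarith, ?_⟩, ?_⟩
            · have hle1 : t₀ + (v - e1) ≤ d1 := by rw [h1]; linarith [hu.1]
              have hle2 : t₀ + (v - e1) ≤ d2 := by rw [he2] at *; linarith [hv.2]
              exact le_min hle1 hle2
            · -- f (t₀ + (v - e1)) = g (t₀ + (v - e1))
              show f (t₀ + (v - e1)) = g (t₀ + (v - e1))
              have hfs : γ u = f (d1 - u) := by simp only [hγ, if_pos hue]
              have hgs : γ v = g (t₀ + (v - e1)) := by
                simp only [hγ, if_neg (not_le.mpr hve)]
              rw [h1] at hgs ⊢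
              rw [← hfs, heq, hgs]
          have : t₀ + (v - e1) ≤ t₀ := le_csSup hbdd hs'mem
          linarith
        · push_neg at hue
          have h1 := hdistx u hu
          have h2 := hdistx v hv
          rw [if_neg (not_le.mpr hue)] at h1
          rw [if_neg (not_le.mpr hve)] at h2
          rw [heq, h2] at h1
          linarith
    intro u hu v hv heq
    rcases le_total u v with hle | hle
    · exact key u hu v hv hle heq
    · exact (key v hv u hu hle heq.symm).symm
  have hγ0 : γ 0 = y := by
    simp only [hγ, if_pos he1n]
    rw [sub_zero, hfd]
  have hγend : γ (e1 + e2) = z := by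
    by_cases hc : e1 + e2 ≤ e1
    · have he20 : e2 = 0 := by linarith
      simp only [hγ, if_pos hc]
      have hx1 : d1 - (e1 + e2) = t₀ := by rw [he1, he20]; ring
      have hx2 : t₀ = d2 := by rw [he2] at he20; linarith
      rw [hx1, hft₀, hx2, hgd]
    · push_neg at hc
      simp only [hγ, if_neg (not_le.mpr hc)]
      have hx : t₀ + (e1 + e2 - e1) = d2 := by rw [he2]; ring
      rw [hx, hgd]
  have harc : IsArcIn y z (γ '' Icc 0 (e1 + e2)) := by
    refine ⟨0, e1 + e2, by linarith, γ, lip_continuousOn hlip', hinj, rfl, hγ0, hγend⟩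
  obtain ⟨a', b', hab', α', hiso', himg', hy', hz'⟩ := (h y z).2 _ harc
  have hmmem : f t₀ ∈ γ '' Icc 0 (e1 + e2) := ⟨e1, ⟨he1n, by linarith⟩, hγm⟩
  rw [← himg'] at hmmem
  obtain ⟨c, hc, hcm⟩ := hmmem
  have ha'mem : a' ∈ Icc a' b' := ⟨le_refl _, hab'⟩
  have hb'mem : b' ∈ Icc a' b' := ⟨hab', le_refl _⟩
  have eyz : dist y z = b' - a' := by
    have h' := hiso' a' ha'mem b' hb'mem
    rw [hy', hz'] at h'
    rw [h', abs_of_nonpos (by linarith), neg_sub]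
  have eym : dist y (f t₀) = c - a' := by
    have h' := hiso' a' ha'mem c hc
    rw [hy', hcm] at h'
    rw [h', abs_of_nonpos (by linarith [hc.1]), neg_sub]
  have emz' : dist (f t₀) z = b' - c := by
    have h' := hiso' c hc b' hb'mem
    rw [hcm, hz'] at h'
    rw [h', abs_of_nonpos (by linarith [hc.2]), neg_sub]
  unfold Btwn
  rw [eym, emz', eyz]
  ring

/-- Gate property of the median. -/
lemma mgate (h : IsRTree T) {x m y y' z : T} (hm1 : Btwn x m y) (hm2 : Btwn x m y')
    (hm3 : Btwn y m y') (hz : Btwn y z y') : Btwn x m z := by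
  rcases btw_total h hz hm3 with hc | hc
  · -- z between y and m
    exact (branch_add hm2 hm1 (btw_rev hm3) (btw_self_left x m) hc).symm
  · -- m between y and z, so z lies in the y'-branch
    have hy'z : Btwn y' z m := by
      unfold Btwn at hc hz hm3 ⊢
      have c1 : dist y' z = dist z y' := dist_comm _ _
      have c2 : dist y' m = dist m y' := dist_comm _ _
      have c3 : dist y z = dist z y := dist_comm _ _
      have c4 : dist z m = dist m z := dist_comm _ _
      linarith
    exact (branch_add hm1 hm2 hm3 (btw_self_left x m) hy'z).symm

/-- Chain lemma: betweenness relations concatenate across a nondegenerate overlap. -/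
lemma btw_concat (h : IsRTree T) {x y z w : T} (hxy : Btwn x y z) (hyz : Btwn y z w)
    (hne : y ≠ z) : dist x w = dist x y + dist y z + dist z w := by
  obtain ⟨m, hm1, hm2, hm3⟩ := median_exists h x z w
  rcases btw_total h hxy hm1 with hc | hc
  · -- y between x and m
    have hbyw : dist y w = dist y m + dist m w :=
      branch_add hm1 hm2 hm3 hc (btw_self_left w m)
    unfold Btwn at hxy hyz hm1 hm2 hm3 hc
    linarith
  · -- m between x and y: contradiction
    exfalso
    have hmyz : Btwn z y m := by
      unfold Btwn at hc hxy hm1 ⊢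
      have c1 : dist z y = dist y z := dist_comm _ _
      have c2 : dist z m = dist m z := dist_comm _ _
      have c3 : dist m y = dist y m := dist_comm _ _
      linarith
    have hbyw : dist y w = dist y m + dist m w :=
      branch_add (btw_rev hm1) hm3 hm2 hmyz (btw_self_left w m)
    have hyz0 : dist y z = 0 := by
      unfold Btwn at hyz hm3 hmyz
      have c1 : dist z y = dist y z := dist_comm _ _
      linarith
    exact hne (eq_of_dist_eq_zero hyz0)

lemma tl_le (f : T → T) (x : T) : translationLength f ≤ dist x (f x) :=
  ciInf_le ⟨0, by rintro r ⟨y, rfl⟩; exact dist_nonneg⟩ x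

lemma tl_nonneg (f : T → T) : 0 ≤ translationLength f :=
  Real.iInf_nonneg (fun _ => dist_nonneg)

lemma iso_dist (g : T ≃ᵢ T) (a b : T) : dist (g a) (g b) = dist a b :=
  g.isometry.dist_eq a b

lemma iter_dist (g : T ≃ᵢ T) : ∀ (n : ℕ) (a b : T),
    dist ((⇑g)^[n] a) ((⇑g)^[n] b) = dist a b := by
  intro n
  induction n with
  | zero => intro a b; simp
  | succ n ih =>
    intro a b
    rw [Function.iterate_succ_apply, Function.iterate_succ_apply, ih, iso_dist]

lemma aligned_prop (h : IsRTree T) (g : T ≃ᵢ T) {q : T}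
    (hq : Btwn q (g q) (g (g q))) :
    ∀ n : ℕ, dist q ((⇑g)^[n] q) = n * dist q (g q) := by
  rcases eq_or_ne (dist q (g q)) 0 with hb | hb
  · have hfix : g q = q := (eq_of_dist_eq_zero hb).symm
    have hit : ∀ n : ℕ, (⇑g)^[n] q = q := by
      intro n
      induction n with
      | zero => simp
      | succ n ih => rw [Function.iterate_succ_apply, hfix, ih]
    intro n
    rw [hit n, dist_self, hb, mul_zero]
  · have hbpos : 0 < dist q (g q) := lt_of_le_of_ne dist_nonneg (Ne.symm hb)
    have step : ∀ n : ℕ, dist ((⇑g)^[n] q) ((⇑g)^[n+1] q) = dist q (g q) := by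
      intro n
      have e : (⇑g)^[n+1] q = (⇑g)^[n] (g q) := Function.iterate_succ_apply _ _ _
      rw [e, iter_dist]
    have halign : ∀ n : ℕ, Btwn ((⇑g)^[n] q) ((⇑g)^[n+1] q) ((⇑g)^[n+2] q) := by
      intro n
      have h1 : (⇑g)^[n+1] q = (⇑g)^[n] (g q) := Function.iterate_succ_apply _ _ _
      have h2 : (⇑g)^[n+2] q = (⇑g)^[n] (g (g q)) := by
        rw [Function.iterate_succ_apply, Function.iterate_succ_apply]
      rw [h1, h2]
      exact btw_map _ (fun a b => iter_dist g n a b) hq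
    have key : ∀ n : ℕ, dist q ((⇑g)^[n] q) = n * dist q (g q) ∧
        dist q ((⇑g)^[n+1] q) = (n+1) * dist q (g q) := by
      intro n
      induction n with
      | zero =>
        refine ⟨by simp, ?_⟩
        have h1 : (⇑g)^[0+1] q = g q := by simp
        rw [h1]
        push_cast
        ring
      | succ n ih =>
        refine ⟨by push_cast; push_cast at ih; exact ih.2, ?_⟩
        have hxy : Btwn q ((⇑g)^[n] q) ((⇑g)^[n+1] q) := by
          unfold Btwn
          rw [ih.1, step n, ih.2]
          push_cast
          ring
        have hne : (⇑g)^[n] q ≠ (⇑g)^[n+1] q := by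
          intro e
          have hs := step n
          rw [← e, dist_self] at hs
          exact hb hs.symm
        have htot := btw_concat h hxy (halign n) hne
        rw [ih.1, step n, step (n+1)] at htot
        have e2 : (⇑g)^[n+1+1] q = (⇑g)^[n+2] q := rfl
        rw [e2, htot]
        push_cast
        ring
    intro n
    exact (key n).1

lemma tl_eq_of_aligned (h : IsRTree T) (g : T ≃ᵢ T) {q : T}
    (hq : Btwn q (g q) (g (g q))) : translationLength ⇑g = dist q (g q) := by
  have hle := tl_le (⇑g) q
  refine le_antisymm hle ?_
  have : Nonempty T := ⟨q⟩
  refine le_ciInf fun x => ?_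
  by_contra hlt
  push_neg at hlt
  have hbpos : 0 < dist q (g q) := lt_of_le_of_lt dist_nonneg hlt
  have hxi : ∀ k : ℕ, dist x ((⇑g)^[k] x) ≤ k * dist x (g x) := by
    intro k
    induction k with
    | zero => simp
    | succ k ih =>
      have h1 : (⇑g)^[k+1] x = (⇑g)^[k] (g x) := Function.iterate_succ_apply _ _ _
      have h3 : dist ((⇑g)^[k] x) ((⇑g)^[k+1] x) = dist x (g x) := by
        rw [h1, iter_dist]
      have h4 := dist_triangle x ((⇑g)^[k] x) ((⇑g)^[k+1] x)
      rw [h3] at h4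
      push_cast
      linarith
  have main : ∀ n : ℕ, (n:ℝ) * dist q (g q) ≤ 2 * dist q x + n * dist x (g x) := by
    intro n
    have h1 := aligned_prop h g hq n
    have h2 := dist_triangle4 q x ((⇑g)^[n] x) ((⇑g)^[n] q)
    rw [iter_dist] at h2
    have h5 := hxi n
    have hc : dist x q = dist q x := dist_comm _ _
    linarith
  obtain ⟨n, hn⟩ := exists_nat_gt (2 * dist q x / (dist q (g q) - dist x (g x)))
  have hgap : 0 < dist q (g q) - dist x (g x) := by linarith
  have h5 := main n
  rw [div_lt_iff₀ hgap] at hn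
  nlinarith

lemma tl_formula (h : IsRTree T) (g : T ≃ᵢ T) (hg : 0 < translationLength ⇑g) (p : T) :
    ∃ k : ℝ, 0 ≤ k ∧ dist p (g p) = translationLength ⇑g + 2 * k ∧
      dist p (g (g p)) = 2 * dist p (g p) - 2 * k ∧
      ∃ m : T, dist m (g m) = translationLength ⇑g := by
  have hgiso := iso_dist g
  set a := dist p (g p) with ha
  have hapos : 0 < a := lt_of_lt_of_le hg (tl_le _ _)
  obtain ⟨α, hiso, h0, hd, _⟩ := geod0 h p (g p)
  have hmem2 : a/2 ∈ Icc (0:ℝ) a := ⟨by linarith, by linarith⟩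
  have h0mem : (0:ℝ) ∈ Icc (0:ℝ) a := ⟨le_refl _, by linarith⟩
  have hamem : a ∈ Icc (0:ℝ) a := ⟨by linarith, le_refl _⟩
  set m := α (a/2) with hmdef
  have hpm : dist p m = a/2 := by
    have h' := hiso 0 h0mem (a/2) hmem2
    rw [h0] at h'
    rw [hmdef, h', abs_of_nonpos (by linarith), neg_sub, sub_zero]
  have hmgp : dist m (g p) = a/2 := by
    have h' := hiso (a/2) hmem2 a hamem
    rw [hd] at h'
    rw [hmdef, h', abs_of_nonpos (by linarith), neg_sub]
    ring
  have hbpm : Btwn p m (g p) := by unfold Btwn; rw [hpm, hmgp]; ring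
  obtain ⟨c, hc1, hc2, hc3⟩ := median_exists h p (g p) (g (g p))
  set k := dist (g p) c with hk
  have hkn : 0 ≤ k := dist_nonneg
  have hagp : dist (g p) (g (g p)) = a := by rw [hgiso]
  have hpc : dist p c = a - k := by
    have := hc1
    unfold Btwn at this
    have hcm : dist c (g p) = k := dist_comm c (g p) ▸ rfl
    rw [dist_comm c (g p)] at this
    linarith
  have hcg2 : dist c (g (g p)) = a - k := by
    have := hc3
    unfold Btwn at this
    rw [hagp] at this
    linarith
  have hpg2 : dist p (g (g p)) = 2 * a - 2 * k := by
    have := hc2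
    unfold Btwn at this
    linarith
  -- the image of m
  have hbgm : Btwn (g p) (g m) (g (g p)) := btw_map _ hgiso hbpm
  have hgpgm : dist (g p) (g m) = a/2 := by
    rw [hgiso]
    exact hpm
  have hgpm : dist (g p) m = a/2 := by rw [dist_comm]; exact hmgp
  have hgpc : dist (g p) c = k := rfl
  -- Step 1 : 2k < a
  have h2k : 2 * k < a := by
    by_contra hcon
    push_neg at hcon
    have i1 := btw_interp h (btw_rev hbpm) (btw_rev hc1) (by rw [hgpm, hgpc]; linarith)
    have i2 := btw_interp h hbgm hc3 (by rw [hgpgm, hgpc]; linarith)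
    have i3 := btw_interp h i1.1 i2.1 (by rw [hgpm, hgpgm])
    have hz : dist m (g m) = 0 := by
      have := i3.2.2
      rw [hgpm, hgpgm] at this
      linarith
    have := tl_le (⇑g) m
    rw [hz] at this
    linarith
  -- Step 2
  have i4 := btw_interp h (btw_rev hc1) (btw_rev hbpm) (by rw [hgpm, hgpc]; linarith)
  have hcmd : dist c m = a/2 - k := by
    have := i4.2.2
    rw [hgpm, hgpc] at this
    linarith
  have hbpmc : Btwn p m c := btw_rev i4.2.1
  -- Step 3
  have i5 := btw_interp h hc3 hbgm (by rw [hgpgm, hgpc]; linarith)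
  have hcgmd : dist c (g m) = a/2 - k := by
    have := i5.2.2
    rw [hgpgm, hgpc] at this
    linarith
  -- Step 4
  have hmgm : dist m (g m) = a - 2 * k :=
    calc dist m (g m) = dist m c + dist c (g m) :=
          branch_add hc1 hc2 hc3 hbpmc (btw_rev i5.2.1)
      _ = (a/2 - k) + (a/2 - k) := by rw [dist_comm m c, hcmd, hcgmd]
      _ = a - 2 * k := by ring
  have hmgmpos : 0 < dist m (g m) := lt_of_lt_of_le hg (tl_le _ _)
  -- Step 5: images of c
  have hb1' : Btwn (g p) (g c) (g (g p)) := btw_map _ hgiso hc1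
  have hb2' : Btwn (g p) (g c) (g (g (g p))) := btw_map _ hgiso hc2
  have hb3' : Btwn (g (g p)) (g c) (g (g (g p))) := btw_map _ hgiso hc3
  have hgpgc : dist (g p) (g c) = a - k := by rw [hgiso]; exact hpc
  -- Step 6
  have i6 := btw_interp h hc3 hb1' (by rw [hgpc, hgpgc]; linarith)
  have hccp : dist c (g c) = a - 2 * k := by
    have := i6.2.2
    rw [hgpc, hgpgc] at this
    linarith
  -- Step 7
  have hmcc : dist m (g c) = dist m c + dist c (g c) :=
    branch_add hc1 hc2 hc3 hbpmc (btw_rev i6.2.1)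
  have hbmcc : Btwn m c (g c) := hmcc.symm
  -- Step 8
  have hb8 : Btwn (g c) (g (g m)) (g (g (g p))) := btw_map _ hgiso i5.2.1
  have hgcg2m : dist (g c) (g (g m)) = a/2 - k := by rw [hgiso]; exact hcgmd
  -- Step 9
  have hcg2m : dist c (g (g m)) = dist c (g c) + dist (g c) (g (g m)) :=
    branch_add hb1' hb2' hb3' i6.1 (btw_rev hb8)
  have hbccg2m : Btwn c (g c) (g (g m)) := hcg2m.symm
  -- Step 10
  have hnecc : c ≠ g c := by
    intro e
    rw [← e, dist_self] at hccp
    rw [hmgm] at hmgmpos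
    linarith
  have htot := btw_concat h hbmcc hbccg2m hnecc
  -- Step 11
  have hgmg2m : dist (g m) (g (g m)) = a - 2 * k := by rw [hgiso]; exact hmgm
  have halignm : Btwn m (g m) (g (g m)) := by
    unfold Btwn
    rw [hmgm, hgmg2m, htot, dist_comm m c, hcmd, hccp, hgcg2m]
    ring
  have hlm := tl_eq_of_aligned h g halignm
  rw [hmgm] at hlm
  exact ⟨k, hkn, by linarith, by linarith, m, by rw [hmgm, hlm]⟩

lemma aligned_of_axis (h : IsRTree T) (g : T ≃ᵢ T) (hg : 0 < translationLength ⇑g)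
    {p : T} (hp : dist p (g p) = translationLength ⇑g) :
    Btwn p (g p) (g (g p)) := by
  obtain ⟨k, hk0, h1, h2, _⟩ := tl_formula h g hg p
  have hk : k = 0 := by rw [hp] at h1; linarith
  unfold Btwn
  have e : dist (g p) (g (g p)) = dist p (g p) := iso_dist g p (g p)
  rw [e, hk] at *
  linarith

lemma seg_axis (g : T ≃ᵢ T) {p z : T} (hp : dist p (g p) = translationLength ⇑g)
    (hz : Btwn p z (g p)) : dist z (g z) = translationLength ⇑g := by
  have h1 : dist z (g p) = dist p (g p) - dist p z := by unfold Btwn at hz; linarith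
  have h2 : dist (g p) (g z) = dist p z := iso_dist g p z
  have h3 := dist_triangle z (g p) (g z)
  have h4 := tl_le (⇑g) z
  apply le_antisymm
  · rw [hp] at h1; linarith
  · exact h4

lemma iter_axis (g : T ≃ᵢ T) {b : T} (hb : dist b (g b) = translationLength ⇑g) :
    ∀ i : ℕ, dist ((⇑g)^[i] b) (g ((⇑g)^[i] b)) = translationLength ⇑g := by
  intro i
  induction i with
  | zero => simpa
  | succ i ih =>
    have h1 : (⇑g)^[i+1] b = g ((⇑g)^[i] b) := Function.iterate_succ_apply' _ _ _
    rw [h1, iso_dist]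
    exact ih

lemma symm_axis (g : T ≃ᵢ T) {b : T} (hb : dist b (g b) = translationLength ⇑g) :
    ∀ i : ℕ, dist ((⇑g.symm)^[i] b) (g ((⇑g.symm)^[i] b)) = translationLength ⇑g := by
  intro i
  induction i with
  | zero => simpa
  | succ i ih =>
    have h1 : (⇑g.symm)^[i+1] b = g.symm ((⇑g.symm)^[i] b) :=
      Function.iterate_succ_apply' _ _ _
    rw [h1]
    have h2 : g (g.symm ((⇑g.symm)^[i] b)) = (⇑g.symm)^[i] b :=
      g.apply_symm_apply _
    rw [h2]
    have h3 : dist (g.symm ((⇑g.symm)^[i] b)) ((⇑g.symm)^[i] b)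
        = dist (g (g.symm ((⇑g.symm)^[i] b))) (g ((⇑g.symm)^[i] b)) :=
      (iso_dist g _ _).symm
    rw [h3, h2]
    exact ih

lemma iter_cancel (g : T ≃ᵢ T) : ∀ (k i j : ℕ) (x : T),
    (⇑g)^[i + k] ((⇑g.symm)^[j + k] x) = (⇑g)^[i] ((⇑g.symm)^[j] x) := by
  intro k
  induction k with
  | zero => intro i j x; rfl
  | succ k ih =>
    intro i j x
    have e1 : i + (k+1) = (i + k) + 1 := rfl
    have e2 : j + (k+1) = (j + k) + 1 := rfl
    rw [e1, e2, Function.iterate_succ_apply, Function.iterate_succ_apply',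
      g.apply_symm_apply]
    exact ih i j x

lemma seg_axis_chain (h : IsRTree T) (g : T ≃ᵢ T) (hg : 0 < translationLength ⇑g)
    {b : T} (hb : dist b (g b) = translationLength ⇑g) :
    ∀ (m : ℕ) (z : T), Btwn b z ((⇑g)^[m] b) → dist z (g z) = translationLength ⇑g := by
  intro m
  induction m with
  | zero =>
    intro z hz
    unfold Btwn at hz
    rw [Function.iterate_zero_apply, dist_self] at hz
    have hc := dist_comm b z
    have h0 : dist b z = 0 := by linarith [dist_nonneg (x := b) (y := z)]
    have := eq_of_dist_eq_zero h0
    rw [← this]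
    exact hb
  | succ m ih =>
    intro z hz
    have hbAl : Btwn b (g b) (g (g b)) := aligned_of_axis h g hg hb
    have hprop := aligned_prop h g hbAl
    have hstep : dist ((⇑g)^[m] b) ((⇑g)^[m+1] b) = dist b (g b) := by
      rw [Function.iterate_succ_apply, iter_dist]
    have hpm := hprop m
    have hpm1 := hprop (m+1)
    have hbm : Btwn b ((⇑g)^[m] b) ((⇑g)^[m+1] b) := by
      unfold Btwn
      rw [hpm, hpm1, hstep]
      push_cast
      ring
    rcases btw_total h hz hbm with hc1 | hc1
    · exact ih z hc1
    · have hseg : Btwn ((⇑g)^[m] b) z ((⇑g)^[m+1] b) := by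
        unfold Btwn at hz hbm hc1 ⊢
        push_cast at hpm hpm1
        linarith
      have hax : dist ((⇑g)^[m] b) (g ((⇑g)^[m] b)) = translationLength ⇑g :=
        iter_axis g hb m
      have he : g ((⇑g)^[m] b) = (⇑g)^[m+1] b :=
        (Function.iterate_succ_apply' _ _ _).symm
      rw [← he] at hseg
      exact seg_axis g hax hseg

lemma cD (h : IsRTree T) (g : T ≃ᵢ T) (hg : 0 < translationLength ⇑g) {b : T}
    (hb : dist b (g b) = translationLength ⇑g) :
    ∀ i j : ℕ, i ≤ j →
      dist ((⇑g)^[i] b) ((⇑g)^[j] b) = ((j:ℝ) - (i:ℝ)) * translationLength ⇑g := by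
  intro i j hij
  have hal := aligned_of_axis h g hg hb
  have e : (⇑g)^[j] b = (⇑g)^[i] ((⇑g)^[j-i] b) := by
    rw [← Function.iterate_add_apply]
    congr 1
    omega
  rw [e, iter_dist, aligned_prop h g hal (j-i), hb, Nat.cast_sub hij]

lemma col (h : IsRTree T) (g : T ≃ᵢ T) (hg : 0 < translationLength ⇑g)
    {x p : T} (hx : dist x (g x) = translationLength ⇑g)
    (hp : dist p (g p) = translationLength ⇑g)
    {n : ℕ} (hn : dist x p + 2 * translationLength ⇑g ≤ (n:ℝ) * translationLength ⇑g) :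
    Btwn ((⇑g)^[0] ((⇑g.symm)^[n] p)) x ((⇑g)^[2*n] ((⇑g.symm)^[n] p)) := by
  set L := translationLength ⇑g with hLdef
  have hLpos : 0 < L := hg
  set b := (⇑g.symm)^[n] p with hbdef
  have hbax : dist b (g b) = L := symm_axis g hp n
  have D := cD h g hg hbax
  have B : ∀ i j k : ℕ, i ≤ j → j ≤ k →
      Btwn ((⇑g)^[i] b) ((⇑g)^[j] b) ((⇑g)^[k] b) := by
    intro i j k hij hjk
    unfold Btwn
    rw [D i j hij, D j k hjk, D i k (le_trans hij hjk)]
    ring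
  have hcp : (⇑g)^[n] b = p := by
    rw [hbdef]
    simpa using iter_cancel g n 0 0 p
  have hgc : ∀ i : ℕ, g ((⇑g)^[i] b) = (⇑g)^[i+1] b := by
    intro i
    exact (Function.iterate_succ_apply' _ _ _).symm
  obtain ⟨f, hf1, hf2, hf3⟩ := median_exists h x ((⇑g)^[0] b) ((⇑g)^[2*n] b)
  have gate : ∀ z, Btwn ((⇑g)^[0] b) z ((⇑g)^[2*n] b) → Btwn x f z :=
    fun z hz => mgate h hf1 hf2 hf3 hz
  have d01 : dist ((⇑g)^[0] b) ((⇑g)^[1] b) = L := by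
    have := D 0 1 (by omega); push_cast at this; linarith
  have d0n : dist ((⇑g)^[0] b) ((⇑g)^[n] b) = (n:ℝ) * L := by
    have := D 0 n (by omega); push_cast at this; linarith
  have d02n : dist ((⇑g)^[0] b) ((⇑g)^[2*n] b) = 2*(n:ℝ) * L := by
    have := D 0 (2*n) (by omega); push_cast at this; linarith
  have d02n1 : dist ((⇑g)^[0] b) ((⇑g)^[2*n+1] b) = (2*(n:ℝ)+1) * L := by
    have := D 0 (2*n+1) (by omega); push_cast at this; linarith
  have hfp : Btwn x f p := by
    have := gate ((⇑g)^[n] b) (B 0 n (2*n) (by omega) (by omega))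
    rwa [hcp] at this
  have hfpd : dist f p ≤ dist x p := by
    unfold Btwn at hfp
    linarith [dist_nonneg (x := x) (y := f)]
  have hd0p : dist ((⇑g)^[0] b) p = (n:ℝ)*L := by rw [← hcp]; exact d0n
  have ht₀low : (n:ℝ)*L - dist x p ≤ dist ((⇑g)^[0] b) f := by
    have h1 := dist_triangle ((⇑g)^[0] b) f p
    linarith
  have ht₀high : dist ((⇑g)^[0] b) f ≤ (n:ℝ)*L + dist x p := by
    have h1 := dist_triangle ((⇑g)^[0] b) p f
    have h3 : dist p f = dist f p := dist_comm _ _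
    linarith
  have ht₀a : 2*L ≤ dist ((⇑g)^[0] b) f := by linarith [dist_nonneg (x := x) (y := p)]
  have ht₀b : dist ((⇑g)^[0] b) f + 2*L ≤ 2*(n:ℝ)*L := by
    linarith [dist_nonneg (x := x) (y := p)]
  have hn2 : 2 ≤ n := by
    have h2L : 2*L ≤ (n:ℝ)*L := by linarith [dist_nonneg (x := x) (y := p)]
    have h2n : (2:ℝ) ≤ (n:ℝ) := le_of_mul_le_mul_right (by linarith) hLpos
    exact_mod_cast h2n
  have i1 := btw_interp h (B 0 1 (2*n) (by omega) (by omega)) hf3 (by rw [d01]; linarith)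
  have hf_1_2n1 : Btwn ((⇑g)^[1] b) f ((⇑g)^[2*n+1] b) :=
    btw_extend i1.2.1 (B 1 (2*n) (2*n+1) (by omega) (by omega))
  have hf_0_2n1 : Btwn ((⇑g)^[0] b) f ((⇑g)^[2*n+1] b) :=
    btw_extend hf3 (B 0 (2*n) (2*n+1) (by omega) (by omega))
  have hdgf1 : dist ((⇑g)^[1] b) (g f) = dist ((⇑g)^[0] b) f := by
    have e := iso_dist g ((⇑g)^[0] b) f
    rw [hgc 0] at e
    exact e
  have hdgf_r : dist (g f) ((⇑g)^[2*n+1] b) = 2*(n:ℝ)*L - dist ((⇑g)^[0] b) f := by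
    have e := iso_dist g f ((⇑g)^[2*n] b)
    rw [hgc (2*n)] at e
    have h2 : dist f ((⇑g)^[2*n] b) = 2*(n:ℝ)*L - dist ((⇑g)^[0] b) f := by
      unfold Btwn at hf3
      linarith
    rw [e, h2]
  have hdgf0 : dist ((⇑g)^[0] b) (g f) = dist ((⇑g)^[0] b) f + L := by
    have h1 := dist_triangle ((⇑g)^[0] b) ((⇑g)^[1] b) (g f)
    have h2 := dist_triangle ((⇑g)^[0] b) (g f) ((⇑g)^[2*n+1] b)
    linarith
  have hbgf01 : Btwn ((⇑g)^[0] b) (g f) ((⇑g)^[2*n+1] b) := by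
    unfold Btwn
    rw [hdgf0, hdgf_r, d02n1]
    ring
  have i3 := btw_interp h hbgf01 (B 0 (2*n) (2*n+1) (by omega) (by omega))
    (by rw [hdgf0, d02n]; linarith)
  have i4 := btw_interp h hf_0_2n1 hbgf01 (by rw [hdgf0]; linarith)
  have hdfgf : dist f (g f) = L := by
    have := i4.2.2
    rw [hdgf0] at this
    linarith
  have hxgf : Btwn x f (g f) := gate _ i3.1
  have hdxgf : dist x (g f) = dist x f + L := by
    unfold Btwn at hxgf
    rw [hdfgf] at hxgf
    linarith
  have hmgx : Btwn (g x) (g f) f := by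
    have m1 := btw_map _ (iso_dist g) hf1
    rw [hgc 0] at m1
    have m2 := btw_map _ (iso_dist g) hf2
    rw [hgc (2*n)] at m2
    have m3 := btw_map _ (iso_dist g) hf3
    rw [hgc 0, hgc (2*n)] at m3
    exact mgate h m1 m2 m3 hf_1_2n1
  have e1 : dist (g x) f = dist x f + L := by
    unfold Btwn at hmgx
    have e := iso_dist g x f
    have hc : dist (g f) f = L := by rw [dist_comm]; exact hdfgf
    linarith
  have b1 : Btwn f x (g x) := by
    unfold Btwn
    have c1 : dist f x = dist x f := dist_comm _ _
    have c2 : dist f (g x) = dist (g x) f := dist_comm _ _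
    rw [c1, c2, e1, hx]
  have b2 : Btwn f (g f) (g x) := btw_rev hmgx
  rcases btw_total h b1 b2 with hcc | hcc
  · have hxf0 : dist x f = 0 := by
      unfold Btwn at hcc
      have c1 : dist f x = dist x f := dist_comm _ _
      linarith
    have hxf : x = f := eq_of_dist_eq_zero hxf0
    rw [hxf]
    exact hf3
  · exfalso
    unfold Btwn at hcc
    have c2 : dist (g f) x = dist x (g f) := dist_comm _ _
    have c3 : dist f x = dist x f := dist_comm _ _
    linarith

lemma gate (h : IsRTree T) (g : T ≃ᵢ T) (hg : 0 < translationLength ⇑g)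
    {p : T} (hp : dist p (g p) = translationLength ⇑g) (q : T) :
    ∃ P : T, dist P (g P) = translationLength ⇑g ∧
      ∀ a : T, dist a (g a) = translationLength ⇑g → Btwn q P a := by
  set L := translationLength ⇑g with hLdef
  have hLpos : 0 < L := hg
  obtain ⟨n, hn0⟩ := exists_nat_ge ((2 * dist q p + 2*L)/L)
  have hn : 2 * dist q p + 2*L ≤ (n:ℝ) * L := by
    rw [div_le_iff₀ hLpos] at hn0
    linarith
  have hqpn : 0 ≤ dist q p := dist_nonneg
  set b := (⇑g.symm)^[n] p with hbdef
  have hbax : dist b (g b) = L := symm_axis g hp n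
  have D := cD h g hg hbax
  have B : ∀ i j k : ℕ, i ≤ j → j ≤ k →
      Btwn ((⇑g)^[i] b) ((⇑g)^[j] b) ((⇑g)^[k] b) := by
    intro i j k hij hjk
    unfold Btwn
    rw [D i j hij, D j k hjk, D i k (le_trans hij hjk)]
    ring
  obtain ⟨P, hP1, hP2, hP3⟩ := median_exists h q ((⇑g)^[0] b) ((⇑g)^[2*n] b)
  have gateP : ∀ z, Btwn ((⇑g)^[0] b) z ((⇑g)^[2*n] b) → Btwn q P z :=
    fun z hz => mgate h hP1 hP2 hP3 hz
  have hPax : dist P (g P) = L := seg_axis_chain h g hg hbax (2*n) P hP3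
  refine ⟨P, hPax, ?_⟩
  intro a ha
  obtain ⟨M, hM0⟩ := exists_nat_ge ((dist a p + 2*L)/L)
  have hM : dist a p + 2*L ≤ (M:ℝ) * L := by
    rw [div_le_iff₀ hLpos] at hM0
    linarith
  have hNcol : dist a p + 2*L ≤ ((n + M : ℕ):ℝ) * L := by
    push_cast
    nlinarith [Nat.cast_nonneg (α := ℝ) n, hLpos.le]
  set B2 := (⇑g.symm)^[n + M] p with hB2def
  have hB2ax : dist B2 (g B2) = L := symm_axis g hp (n + M)
  have D' := cD h g hg hB2ax
  have B' : ∀ i j k : ℕ, i ≤ j → j ≤ k →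
      Btwn ((⇑g)^[i] B2) ((⇑g)^[j] B2) ((⇑g)^[k] B2) := by
    intro i j k hij hjk
    unfold Btwn
    rw [D' i j hij, D' j k hjk, D' i k (le_trans hij hjk)]
    ring
  have hCp : (⇑g)^[n + M] B2 = p := by
    rw [hB2def]
    simpa using iter_cancel g (n + M) 0 0 p
  have hacol : Btwn ((⇑g)^[0] B2) a ((⇑g)^[2*(n+M)] B2) :=
    col h g hg ha hp (by push_cast at hNcol ⊢; linarith)
  have hrel : ∀ i : ℕ, (⇑g)^[i] b = (⇑g)^[i + M] B2 := by
    intro i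
    rw [hbdef, hB2def]
    exact (iter_cancel g M i n p).symm
  obtain ⟨P', hP'1, hP'2, hP'3⟩ := median_exists h q ((⇑g)^[0] B2) ((⇑g)^[2*(n+M)] B2)
  have gateP' : ∀ z, Btwn ((⇑g)^[0] B2) z ((⇑g)^[2*(n+M)] B2) → Btwn q P' z :=
    fun z hz => mgate h hP'1 hP'2 hP'3 hz
  have hPbig : Btwn ((⇑g)^[0] B2) P ((⇑g)^[2*(n+M)] B2) := by
    have hz := hP3
    rw [hrel 0, hrel (2*n)] at hz
    have h2 : Btwn ((⇑g)^[0+M] B2) ((⇑g)^[2*n+M] B2) ((⇑g)^[2*(n+M)] B2) :=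
      B' (0+M) (2*n+M) (2*(n+M)) (by omega) (by omega)
    have h3 : Btwn ((⇑g)^[0+M] B2) P ((⇑g)^[2*(n+M)] B2) := btw_extend hz h2
    have h1 : Btwn ((⇑g)^[0] B2) ((⇑g)^[0+M] B2) ((⇑g)^[2*(n+M)] B2) :=
      B' 0 (0+M) (2*(n+M)) (by omega) (by omega)
    exact btw_extend_left h1 h3
  have hqP'P : Btwn q P' P := gateP' P hPbig
  have hppos : Btwn ((⇑g)^[0] B2) p ((⇑g)^[2*(n+M)] B2) := by
    have := B' 0 (n+M) (2*(n+M)) (by omega) (by omega)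
    rwa [hCp] at this
  have hqP'p : Btwn q P' p := gateP' p hppos
  have hP'p : dist P' p ≤ dist q p := by
    unfold Btwn at hqP'p
    linarith [dist_nonneg (x := q) (y := P')]
  have dB0p : dist ((⇑g)^[0] B2) p = ((n+M : ℕ):ℝ)*L := by
    rw [← hCp]
    have := D' 0 (n+M) (by omega)
    push_cast at this ⊢
    linarith
  have hT0low : ((n+M:ℕ):ℝ)*L - dist q p ≤ dist ((⇑g)^[0] B2) P' := by
    have h1 := dist_triangle ((⇑g)^[0] B2) P' p
    linarith
  have hT0high : dist ((⇑g)^[0] B2) P' ≤ ((n+M:ℕ):ℝ)*L + dist q p := by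
    have h1 := dist_triangle ((⇑g)^[0] B2) p P'
    have h2 : dist p P' = dist P' p := dist_comm _ _
    linarith
  have dB0M : dist ((⇑g)^[0] B2) ((⇑g)^[0+M] B2) = (M:ℝ)*L := by
    have := D' 0 (0+M) (by omega); push_cast at this ⊢; linarith
  have j1 := btw_interp h (B' 0 (0+M) (2*(n+M)) (by omega) (by omega)) hP'3
    (by rw [dB0M]; push_cast at hT0low ⊢; linarith)
  have dMsm : dist ((⇑g)^[0+M] B2) ((⇑g)^[2*n+M] B2) = 2*(n:ℝ)*L := by
    have := D' (0+M) (2*n+M) (by omega); push_cast at this ⊢; linarith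
  have j1d : dist ((⇑g)^[0+M] B2) P' = dist ((⇑g)^[0] B2) P' - (M:ℝ)*L := by
    have := j1.2.2
    rw [dB0M] at this
    linarith
  have j2 := btw_interp h j1.2.1 (B' (0+M) (2*n+M) (2*(n+M)) (by omega) (by omega))
    (by rw [j1d, dMsm]; push_cast at hT0high ⊢; linarith)
  have hP'small : Btwn ((⇑g)^[0] b) P' ((⇑g)^[2*n] b) := by
    rw [hrel 0, hrel (2*n)]
    exact j2.1
  have hqPP' : Btwn q P P' := gateP P' hP'small
  have hPP' : P = P' := btw_antisymm hqPP' hqP'P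
  rw [hPP']
  exact gateP' a hacol

end RTreeAux

open RTreeAux


/-- If `φ` and `ψ` are hyperbolic isometries of an ℝ-tree with disjoint axes, then
`ψ ∘ φ` is hyperbolic with `ℓ(ψ∘φ) = ℓ(φ) + ℓ(ψ) + 2 D`, where `D` is the distance between
the axes, and the axis of `ψ ∘ φ` meets both the axis of `φ` and the axis of `ψ`. -/
theorem comp_of_hyperbolic_disjoint_axes {T : Type*} [MetricSpace T]
    (h : IsRTree T) (φ ψ : T ≃ᵢ T)
    (hφ : 0 < translationLength (⇑φ)) (hψ : 0 < translationLength (⇑ψ))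
    (hdisj : Disjoint {x : T | dist x (φ x) = translationLength (⇑φ)}
                      {x : T | dist x (ψ x) = translationLength (⇑ψ)}) :
    0 < translationLength (fun x : T => ψ (φ x)) ∧
    translationLength (fun x : T => ψ (φ x)) =
      translationLength (⇑φ) + translationLength (⇑ψ) +
        2 * sInf {r : ℝ | ∃ x ∈ {x : T | dist x (φ x) = translationLength (⇑φ)},
                   ∃ y ∈ {x : T | dist x (ψ x) = translationLength (⇑ψ)}, r = dist x y} ∧
    ({x : T | dist x (ψ (φ x)) = translationLength (fun x : T => ψ (φ x))} ∩
      {x : T | dist x (φ x) = translationLength (⇑φ)}).Nonempty ∧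
    ({x : T | dist x (ψ (φ x)) = translationLength (fun x : T => ψ (φ x))} ∩
      {x : T | dist x (ψ x) = translationLength (⇑ψ)}).Nonempty := by
  classical
  rcases isEmpty_or_nonempty T with hT | hT
  · exfalso
    have h0 : translationLength (⇑φ) = 0 := Real.iInf_of_isEmpty _
    rw [h0] at hφ
    exact lt_irrefl 0 hφ
  set L1 := translationLength (⇑φ) with hL1
  set L2 := translationLength (⇑ψ) with hL2
  obtain ⟨k1, -, -, -, pA, hpA⟩ := tl_formula h φ hφ hT.some
  obtain ⟨k2, -, -, -, qB, hqB⟩ := tl_formula h ψ hψ hT.some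
  obtain ⟨P, hPA, hPgate⟩ := gate h φ hφ hpA qB
  obtain ⟨Q, hQB, hQgate⟩ := gate h ψ hψ hqB P
  have hPneQ : P ≠ Q := by
    intro e
    have h1 : P ∈ {x : T | dist x (φ x) = L1} := hPA
    have h2 : P ∈ {x : T | dist x (ψ x) = L2} := by
      rw [e] at h1 ⊢
      exact hQB
    exact (Set.disjoint_left.mp hdisj h1) h2
  have hD : 0 < dist P Q := dist_pos.mpr hPneQ
  have hQq : Btwn P Q qB := hQgate qB hqB
  have bridgeA : ∀ a, dist a (φ a) = L1 → Btwn Q P a := by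
    intro a ha
    have h1 : Btwn qB P a := hPgate a ha
    have h2 : Btwn qB Q P := btw_rev hQq
    unfold Btwn at h1 h2 ⊢
    have t := dist_triangle Q P a
    have t2 := dist_triangle qB Q a
    linarith
  have bridge : ∀ a b2, dist a (φ a) = L1 → dist b2 (ψ b2) = L2 →
      dist a b2 = dist a P + dist P Q + dist Q b2 := by
    intro a b2 ha hb2
    have h1 : Btwn a P Q := btw_rev (bridgeA a ha)
    have h2 : Btwn P Q b2 := hQgate b2 hb2
    exact btw_concat h h1 h2 hPneQ
  have hφP : dist (φ P) (φ (φ P)) = L1 := by rw [iso_dist]; exact hPA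
  have hφinvP : dist (φ.symm P) (φ (φ.symm P)) = L1 := symm_axis φ hPA 1
  have hψQ : dist (ψ Q) (ψ (ψ Q)) = L2 := by rw [iso_dist]; exact hQB
  have hψinvQ : dist (ψ.symm Q) (ψ (ψ.symm Q)) = L2 := symm_axis ψ hQB 1
  have dPφP : dist P (φ P) = L1 := hPA
  have dQψQ : dist Q (ψ Q) = L2 := hQB
  have dφinvP : dist (φ.symm P) P = L1 := by
    have e := iso_dist φ (φ.symm P) P
    rw [φ.apply_symm_apply] at e
    rw [← e]
    exact hPA
  have dψinvQ : dist (ψ.symm Q) Q = L2 := by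
    have e := iso_dist ψ (ψ.symm Q) Q
    rw [ψ.apply_symm_apply] at e
    rw [← e]
    exact hQB
  -- bridge instances
  have e1 : dist P (ψ Q) = dist P Q + L2 := by
    have hb := bridge P (ψ Q) hPA hψQ
    rw [dist_self, dQψQ] at hb
    linarith
  have e2 : dist (φ P) Q = L1 + dist P Q := by
    have hb := bridge (φ P) Q hφP hQB
    rw [dist_self] at hb
    have hc : dist (φ P) P = L1 := by rw [dist_comm]; exact hPA
    rw [hc] at hb
    linarith
  have e3 : dist (φ P) (ψ.symm Q) = L1 + dist P Q + L2 := by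
    have hb := bridge (φ P) (ψ.symm Q) hφP hψinvQ
    have hc : dist (φ P) P = L1 := by rw [dist_comm]; exact hPA
    have hc2 : dist Q (ψ.symm Q) = L2 := by rw [dist_comm]; exact dψinvQ
    rw [hc, hc2] at hb
    linarith
  have e4 : dist (φ.symm P) Q = L1 + dist P Q := by
    have hb := bridge (φ.symm P) Q hφinvP hQB
    rw [dist_self, dφinvP] at hb
    linarith
  -- betweenness chains
  have B1 : Btwn P Q (ψ Q) := by unfold Btwn; rw [dQψQ, e1]
  have B2' : Btwn (ψ.symm Q) Q (φ P) := by
    unfold Btwn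
    rw [dψinvQ, dist_comm Q (φ P), e2, dist_comm (ψ.symm Q) (φ P), e3]
    ring
  have B2 : Btwn Q (ψ Q) (ψ (φ P)) := by
    have hb := btw_map _ (iso_dist ψ) B2'
    rwa [ψ.apply_symm_apply] at hb
  have B3 : Btwn Q P (φ P) := by
    unfold Btwn
    rw [dist_comm Q P, dPφP, dist_comm Q (φ P), e2]
    ring
  have B4' : Btwn (φ.symm P) P Q := by
    unfold Btwn
    rw [dφinvP, e4]
  have B4 : Btwn P (φ P) (φ Q) := by
    have hb := btw_map _ (iso_dist φ) B4'
    rwa [φ.apply_symm_apply] at hb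
  have hPneφP : P ≠ φ P := by
    intro e
    have hx := dPφP
    rw [← e, dist_self] at hx
    linarith
  have hQφQ := btw_concat h B3 B4 hPneφP
  have dφPφQ : dist (φ P) (φ Q) = dist P Q := iso_dist φ P Q
  have hQφQ' : dist Q (φ Q) = L1 + 2 * dist P Q := by
    rw [hQφQ, dist_comm Q P, dPφP, dφPφQ]
    ring
  have BQφPφQ : Btwn Q (φ P) (φ Q) := by
    unfold Btwn
    rw [dist_comm Q (φ P), e2, dφPφQ, hQφQ']
    ring
  have gmap : ∀ a b2 : T, dist (ψ (φ a)) (ψ (φ b2)) = dist a b2 := by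
    intro a b2
    rw [iso_dist, iso_dist]
  have T2 : Btwn (ψ Q) (ψ (φ P)) (ψ (φ Q)) := btw_map _ (iso_dist ψ) BQφPφQ
  have T3 : Btwn (ψ (φ P)) (ψ (φ Q)) (ψ (φ (ψ Q))) := btw_map (fun x => ψ (φ x)) gmap B1
  have T4 : Btwn (ψ (φ Q)) (ψ (φ (ψ Q))) (ψ (φ (ψ (φ P)))) := btw_map (fun x => ψ (φ x)) gmap B2
  have dψQψφP : dist (ψ Q) (ψ (φ P)) = L1 + dist P Q := by
    rw [iso_dist, dist_comm]
    exact e2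
  have hneQψQ : Q ≠ ψ Q := by
    intro e
    have hx := dQψQ
    rw [← e, dist_self] at hx
    linarith
  have s2 := btw_concat h B1 B2 hneQψQ
  have dPgP : dist P (ψ (φ P)) = L1 + L2 + 2 * dist P Q := by
    rw [s2, dQψQ, dψQψφP]
    ring
  have s2' : Btwn P (ψ Q) (ψ (φ P)) := by
    unfold Btwn
    rw [e1, dψQψφP, dPgP]
    ring
  have hne3 : ψ Q ≠ ψ (φ P) := by
    intro e
    have hx := dψQψφP
    rw [← e, dist_self] at hx
    linarith
  have s3 := btw_concat h s2' T2 hne3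
  have dψφPψφQ : dist (ψ (φ P)) (ψ (φ Q)) = dist P Q := gmap P Q
  have dPψφQ : dist P (ψ (φ Q)) = L1 + L2 + 3 * dist P Q := by
    rw [s3, e1, dψQψφP, dψφPψφQ]
    ring
  have s3' : Btwn P (ψ (φ P)) (ψ (φ Q)) := by
    unfold Btwn
    rw [dPgP, dψφPψφQ, dPψφQ]
    ring
  have hne4 : ψ (φ P) ≠ ψ (φ Q) := by
    intro e
    have hx := dψφPψφQ
    rw [← e, dist_self] at hx
    linarith
  have s4 := btw_concat h s3' T3 hne4
  have dψφQψφψQ : dist (ψ (φ Q)) (ψ (φ (ψ Q))) = L2 := by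
    rw [gmap]
    exact dQψQ
  have dPψφψQ : dist P (ψ (φ (ψ Q))) = L1 + 2*L2 + 3*dist P Q := by
    rw [s4, dPgP, dψφPψφQ, dψφQψφψQ]
    ring
  have s4' : Btwn P (ψ (φ Q)) (ψ (φ (ψ Q))) := by
    unfold Btwn
    rw [dPψφQ, dψφQψφψQ, dPψφψQ]
    ring
  have hne5 : ψ (φ Q) ≠ ψ (φ (ψ Q)) := by
    intro e
    have hx := dψφQψφψQ
    rw [← e, dist_self] at hx
    linarith
  have s5 := btw_concat h s4' T4 hne5
  have dψφψQg2P : dist (ψ (φ (ψ Q))) (ψ (φ (ψ (φ P)))) = L1 + dist P Q := by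
    rw [gmap]
    exact dψQψφP
  have dPg2P : dist P (ψ (φ (ψ (φ P)))) = 2 * (L1 + L2 + 2 * dist P Q) := by
    rw [s5, dPψφQ, dψφQψφψQ, dψφψQg2P]
    ring
  -- alignment of P for the composition
  set Φ := φ.trans ψ with hΦ
  have eΦ : ∀ x : T, Φ x = ψ (φ x) := fun x => IsometryEquiv.trans_apply φ ψ x
  have halP : Btwn P (Φ P) (Φ (Φ P)) := by
    simp only [eΦ]
    unfold Btwn
    have hmid : dist (ψ (φ P)) (ψ (φ (ψ (φ P)))) = dist P (ψ (φ P)) := gmap P (ψ (φ P))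
    rw [hmid, dPgP, dPg2P]
    ring
  have htl : translationLength ⇑Φ = dist P (Φ P) := tl_eq_of_aligned h Φ halP
  have hcoe : (fun x : T => ψ (φ x)) = ⇑Φ := by
    funext x
    exact (eΦ x).symm
  have htl2 : translationLength (fun x : T => ψ (φ x)) = L1 + L2 + 2 * dist P Q := by
    rw [hcoe, htl, eΦ]
    exact dPgP
  -- Q is also on the axis of the composition
  have hneQφP : Q ≠ φ P := by
    intro e
    have hx := e2
    rw [← e, dist_self] at hx
    linarith
  have s6 := btw_concat h B2' BQφPφQ hneQφP
  have dsymm : dist (ψ.symm Q) (φ Q) = L1 + L2 + 2 * dist P Q := by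
    rw [s6, dψinvQ, dist_comm Q (φ P), e2, dφPφQ]
    ring
  have dQgQ : dist Q (ψ (φ Q)) = L1 + L2 + 2 * dist P Q := by
    have e := iso_dist ψ (ψ.symm Q) (φ Q)
    rw [ψ.apply_symm_apply] at e
    rw [← e] at dsymm
    exact dsymm
  -- the infimum of distances between the axes
  have hmemS : dist P Q ∈ {r : ℝ | ∃ x ∈ {x : T | dist x (φ x) = L1},
      ∃ y ∈ {x : T | dist x (ψ x) = L2}, r = dist x y} := ⟨P, hPA, Q, hQB, rfl⟩
  have hlb : ∀ r ∈ {r : ℝ | ∃ x ∈ {x : T | dist x (φ x) = L1},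
      ∃ y ∈ {x : T | dist x (ψ x) = L2}, r = dist x y}, dist P Q ≤ r := by
    rintro r ⟨a, ha, b2, hb2, rfl⟩
    have hb := bridge a b2 ha hb2
    have n1 : 0 ≤ dist a P := dist_nonneg
    have n2 : 0 ≤ dist Q b2 := dist_nonneg
    linarith
  have hsinf : sInf {r : ℝ | ∃ x ∈ {x : T | dist x (φ x) = L1},
      ∃ y ∈ {x : T | dist x (ψ x) = L2}, r = dist x y} = dist P Q :=
    le_antisymm (csInf_le ⟨dist P Q, hlb⟩ hmemS) (le_csInf ⟨_, hmemS⟩ hlb)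
  refine ⟨?_, ?_, ⟨P, ?_, hPA⟩, ⟨Q, ?_, hQB⟩⟩
  · rw [htl2]
    linarith
  · rw [htl2, hsinf]
  · show dist P (ψ (φ P)) = translationLength (fun x : T => ψ (φ x))
    rw [htl2]
    exact dPgP
  · show dist Q (ψ (φ Q)) = translationLength (fun x : T => ψ (φ x))
    rw [htl2]
    exact dQgQ
end

section
/- Let (X,d) be a metric space with basepoint * such that (X,*,d) is 0-hyperbolic. Then there exists an ℝ-tree (T, d_T) and an isometric embedding i : X → T such that: (1) no proper subtree of T contains i(X), i.e., every connected subset of T containing i(X) equals T; and (2) for every ℝ-tree T' and every isometric embedding j : X → T' there is a unique isometric embedding k : T → T' with k ∘ i = j. In particular, T is unique up to isometry. -/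
universe u

/-- `T` is a tree hull of `X`: `T` is an ℝ-tree together with an isometric embedding
`i : X → T` such that (1) no proper subtree of `T` contains `i(X)`, and (2) every isometric
embedding of `X` into an ℝ-tree `T'` factors uniquely through an isometric embedding
`k : T → T'` with `k ∘ i = j`. -/
def IsTreeHull (X : Type u) [MetricSpace X] (T : Type u) [MetricSpace T] : Prop :=
  IsRTree T ∧ ∃ i : X → T, Isometry i ∧
    (∀ S : Set T, IsConnected S → Set.range i ⊆ S → S = Set.univ) ∧
    ∀ (T' : Type u) [MetricSpace T'], IsRTree T' → ∀ j : X → T', Isometry j →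
      ∃! k : T → T', Isometry k ∧ k ∘ i = j

open Set

lemma add_sub_two_mul_min (a b : ℝ) : a + b - 2 * min a b = |a - b| := by
  rw [← max_sub_min_eq_abs']
  linarith [min_add_max a b]

lemma min_add_le_add_of_min_le {Y : Type*} {g : Y → Y → ℝ} (g_comm : ∀ a b, g a b = g b a)
    (hg : ∀ a b c, min (g a c) (g b c) ≤ g a b) (p q r s : Y) :
    min (g p r + g q s) (g p s + g q r) ≤ g p q + g r s := by
  have h₁ := hg p q r
  have h₂ := hg p q s
  have h₃ := hg r s p
  have h₄ := hg r s q
  rw [g_comm r p, g_comm s p] at h₃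
  rw [g_comm r q, g_comm s q] at h₄
  grind

section GromovProduct

variable {Z : Type*} [MetricSpace Z]

def IsZeroHyperbolicAt (w : Z) : Prop :=
  ∀ x y z : Z, min (gromovProd w x z) (gromovProd w y z) ≤ gromovProd w x y

lemma gromovProd_comm (w x y : Z) : gromovProd w x y = gromovProd w y x := by
  simp only [gromovProd, dist_comm x y, add_comm (dist w x)]

lemma gromovProd_self (w x : Z) : gromovProd w x x = dist w x := by
  simp only [gromovProd, dist_self]; ring

lemma gromovProd_nonneg (w x y : Z) : 0 ≤ gromovProd w x y := by
  simp only [gromovProd]; linarith [dist_triangle_left x y w]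

lemma gromovProd_le_dist_left (w x y : Z) : gromovProd w x y ≤ dist w x := by
  simp only [gromovProd]; linarith [dist_triangle w x y]

lemma gromovProd_le_dist_right (w x y : Z) : gromovProd w x y ≤ dist w y :=
  gromovProd_comm w x y ▸ gromovProd_le_dist_left w y x

lemma Isometry.gromovProd_eq {Z' : Type*} [MetricSpace Z'] {j : Z → Z'} (hj : Isometry j)
    (w x y : Z) : gromovProd (j w) (j x) (j y) = gromovProd w x y := by
  simp only [gromovProd, hj.dist_eq]

/-- Written in terms of the Gromov products at `w`, the inequality at `r` is the four-point
condition for them. -/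
theorem IsZeroHyperbolicAt.of_base {w : Z} (hw : IsZeroHyperbolicAt w) (r : Z) :
    IsZeroHyperbolicAt r := by
  have hg : ∀ a b, gromovProd r a b = dist w r - gromovProd w r a - gromovProd w r b
      + gromovProd w a b := by
    intro a b
    simp only [gromovProd, dist_comm r]
    ring
  intro a b c
  have h := min_add_le_add_of_min_le (gromovProd_comm w) hw a b c r
  rw [hg, hg, hg]
  rcases min_le_iff.1 h with h | h
  · exact min_le_of_left_le (by linarith [gromovProd_comm w b r, gromovProd_comm w c r])
  · exact min_le_of_right_le (by linarith [gromovProd_comm w a r, gromovProd_comm w c r])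

/-- Otherwise `{z | 0 < (p·z)_r}` and `{z ≠ r | (p·z)_r = 0}` would separate `p` from `q` in `S`;
the second set is open by 0-hyperbolicity at `r`. -/
theorem IsZeroHyperbolicAt.mem_of_dist_add_dist_eq {r : Z} (hr : IsZeroHyperbolicAt r)
    {p q : Z} {S : Set Z} (hS : IsPreconnected S) (hp : p ∈ S) (hq : q ∈ S)
    (hpq : dist p r + dist r q = dist p q) : r ∈ S := by
  rcases eq_or_ne r p with rfl | hrp
  · exact hp
  rcases eq_or_ne r q with rfl | hrq
  · exact hq
  by_contra hrS
  set U := {z | 0 < gromovProd r p z}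
  set V := {z | 0 < dist r z ∧ gromovProd r p z ≤ 0}
  have hU : IsOpen U := isOpen_lt continuous_const (by unfold gromovProd; fun_prop)
  have hV : IsOpen V := by
    refine Metric.isOpen_iff.2 fun z ⟨hz, hpz⟩ => ⟨dist r z, hz, fun z' hz' => ?_⟩
    have hzz' : 0 < gromovProd r z z' := by
      rw [Metric.mem_ball'] at hz'
      simp only [gromovProd]; linarith [dist_triangle_right r z z']
    refine ⟨hzz'.trans_le (gromovProd_le_dist_right r z z'), ?_⟩
    rcases min_le_iff.1 ((hr p z z').trans hpz) with h | h
    · exact h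
    · linarith
  have hSUV : S ⊆ U ∪ V := by
    intro z hz
    have hzr : 0 < dist r z := dist_pos.2 fun h => hrS (h ▸ hz)
    rcases lt_or_ge 0 (gromovProd r p z) with h | h
    · exact Or.inl h
    · exact Or.inr ⟨hzr, h⟩
  have hpU : p ∈ U := by
    change 0 < gromovProd r p p
    rw [gromovProd_self]; exact dist_pos.2 hrp
  have hqV : q ∈ V := by
    refine ⟨dist_pos.2 hrq, ?_⟩
    simp only [gromovProd, dist_comm r p]; linarith
  obtain ⟨z, -, hzU, -, hzV⟩ := hS U V hU hV hSUV ⟨p, hp, hpU⟩ ⟨q, hq, hqV⟩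
  exact hzV.not_gt hzU

end GromovProduct

section Geodesic

variable {Z : Type*} [MetricSpace Z]

def IsGeodesicOn (γ : ℝ → Z) (s : Set ℝ) : Prop :=
  ∀ u ∈ s, ∀ v ∈ s, dist (γ u) (γ v) = |u - v|

lemma continuousOn_of_dist_le_abs {γ : ℝ → Z} {s : Set ℝ}
    (h : ∀ u ∈ s, ∀ v ∈ s, dist (γ u) (γ v) ≤ |u - v|) : ContinuousOn γ s :=
  (LipschitzOnWith.mk_one fun u hu v hv => (Real.dist_eq u v).symm ▸ h u hu v hv).continuousOn

namespace IsGeodesicOn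

variable {γ : ℝ → Z} {s t : Set ℝ} {a b u v : ℝ}

lemma mono (hγ : IsGeodesicOn γ s) (hts : t ⊆ s) : IsGeodesicOn γ t :=
  fun u hu v hv => hγ u (hts hu) v (hts hv)

lemma dist_eq (hγ : IsGeodesicOn γ s) (hu : u ∈ s) (hv : v ∈ s) (huv : u ≤ v) :
    dist (γ u) (γ v) = v - u := by
  rw [hγ u hu v hv, abs_sub_comm, abs_of_nonneg (sub_nonneg.2 huv)]

lemma continuousOn (hγ : IsGeodesicOn γ s) : ContinuousOn γ s :=
  continuousOn_of_dist_le_abs fun u hu v hv => (hγ u hu v hv).le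

lemma injOn (hγ : IsGeodesicOn γ s) : InjOn γ s := fun u hu v hv h => by
  have := hγ u hu v hv
  rw [h, dist_self, eq_comm, abs_eq_zero, sub_eq_zero] at this
  exact this

lemma isArcIn (hγ : IsGeodesicOn γ (Icc a b)) (hab : a ≤ b) :
    IsArcIn (γ a) (γ b) (γ '' Icc a b) :=
  ⟨a, b, hab, γ, hγ.continuousOn, hγ.injOn, rfl, rfl, rfl⟩

lemma dist_add_dist (hγ : IsGeodesicOn γ (Icc a b)) (hu : u ∈ Icc a b) :
    dist (γ a) (γ u) + dist (γ u) (γ b) = dist (γ a) (γ b) := by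
  have hab := hu.1.trans hu.2
  rw [hγ.dist_eq (left_mem_Icc.2 hab) hu hu.1, hγ.dist_eq hu (right_mem_Icc.2 hab) hu.2,
    hγ.dist_eq (left_mem_Icc.2 hab) (right_mem_Icc.2 hab) hab]
  ring

lemma eqOn_of_image_eq {δ : ℝ → Z} (hγ : IsGeodesicOn γ (Icc a b))
    (hδ : IsGeodesicOn δ (Icc a b)) (ha : γ a = δ a) (himg : γ '' Icc a b = δ '' Icc a b) :
    EqOn γ δ (Icc a b) := by
  intro u hu
  obtain ⟨t, ht, htu⟩ : γ u ∈ δ '' Icc a b := himg ▸ mem_image_of_mem γ hu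
  have hmem := left_mem_Icc.2 (hu.1.trans hu.2)
  have : u - a = t - a := by
    rw [← hγ.dist_eq hmem hu hu.1, ← hδ.dist_eq hmem ht ht.1, ha, htu]
  rw [← htu, show t = u by linarith]

end IsGeodesicOn

lemma IsGeodesicSegmentIn.isArcIn {x y : Z} {S : Set Z} (hS : IsGeodesicSegmentIn x y S) :
    IsArcIn x y S := by
  obtain ⟨a, b, hab, γ, hγ, rfl, rfl, rfl⟩ := hS
  exact IsGeodesicOn.isArcIn hγ hab

lemma IsGeodesicSegmentIn.dist_add_dist_of_mem {x y m : Z} {S : Set Z}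
    (hS : IsGeodesicSegmentIn x y S) (hm : m ∈ S) : dist x m + dist m y = dist x y := by
  obtain ⟨a, b, -, γ, hγ, rfl, rfl, rfl⟩ := hS
  obtain ⟨u, hu, rfl⟩ := hm
  exact IsGeodesicOn.dist_add_dist hγ hu

lemma Isometry.isGeodesicOn_comp {Z' : Type*} [MetricSpace Z'] {k : Z → Z'} (hk : Isometry k)
    {γ : ℝ → Z} {s : Set ℝ} (hγ : IsGeodesicOn γ s) : IsGeodesicOn (k ∘ γ) s :=
  fun u hu v hv => (hk.dist_eq _ _).trans (hγ u hu v hv)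

namespace IsArcIn

variable {x y : Z} {A : Set Z}

lemma left_mem (hA : IsArcIn x y A) : x ∈ A := by
  obtain ⟨a, b, hab, α, -, -, rfl, rfl, -⟩ := hA
  exact mem_image_of_mem α (left_mem_Icc.2 hab)

lemma right_mem (hA : IsArcIn x y A) : y ∈ A := by
  obtain ⟨a, b, hab, α, -, -, rfl, -, rfl⟩ := hA
  exact mem_image_of_mem α (right_mem_Icc.2 hab)

lemma isPreconnected (hA : IsArcIn x y A) : IsPreconnected A := by
  obtain ⟨a, b, -, α, hα, -, rfl, -⟩ := hA
  exact isPreconnected_Icc.image α hα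

/-- The parametrization of the arc is a homeomorphism from `[a, b]`, where the only preconnected
set containing both endpoints is the whole interval. -/
lemma subset_of_isPreconnected (hA : IsArcIn x y A) {G : Set Z} (hG : IsPreconnected G)
    (hGA : G ⊆ A) (hx : x ∈ G) (hy : y ∈ G) : A ⊆ G := by
  obtain ⟨a, b, hab, α, hα, hinj, rfl, rfl, rfl⟩ := hA
  have : CompactSpace (Icc a b) := isCompact_iff_compactSpace.1 isCompact_Icc
  set f : Icc a b → Z := (Icc a b).domRestrict α
  have hf : Topology.IsInducing f :=
    ((continuousOn_iff_continuous_domRestrict.1 hα).isClosedEmbedding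
      fun u v h => Subtype.ext (hinj u.2 v.2 h)).isInducing
  have hGf : G ⊆ range f := by rwa [range_domRestrict]
  have hP : IsPreconnected (f ⁻¹' G) := by
    rwa [← hf.isPreconnected_image, image_preimage_eq_of_subset hGf]
  have hIcc : Icc a b ⊆ Subtype.val '' (f ⁻¹' G) :=
    (hP.image _ continuous_subtype_val.continuousOn).Icc_subset
      ⟨⟨a, left_mem_Icc.2 hab⟩, hx, rfl⟩ ⟨⟨b, right_mem_Icc.2 hab⟩, hy, rfl⟩
  rintro _ ⟨u, hu, rfl⟩
  obtain ⟨u', hu', rfl⟩ := hIcc hu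
  exact hu'

end IsArcIn

/-- By 0-hyperbolicity every arc contains the points of a geodesic between its endpoints, and
then it equals that geodesic. -/
theorem isRTree_of_isZeroHyperbolicAt {T : Type*} [MetricSpace T]
    (hyp : ∀ r : T, IsZeroHyperbolicAt r) (hgeo : ∀ x y : T, ∃ S, IsGeodesicSegmentIn x y S) :
    IsRTree T := by
  intro x y
  obtain ⟨S, hS⟩ := hgeo x y
  have harc : ∀ A, IsArcIn x y A → A = S := by
    intro A hA
    obtain ⟨a, b, hab, γ, hγ : IsGeodesicOn γ _, rfl, rfl, rfl⟩ := hS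
    have hsub : γ '' Icc a b ⊆ A := by
      rintro _ ⟨u, hu, rfl⟩
      exact (hyp (γ u)).mem_of_dist_add_dist_eq hA.isPreconnected hA.left_mem hA.right_mem
        (hγ.dist_add_dist hu)
    refine (hA.subset_of_isPreconnected (isPreconnected_Icc.image γ hγ.continuousOn) hsub
      ?_ ?_).antisymm hsub
    exacts [mem_image_of_mem γ (left_mem_Icc.2 hab), mem_image_of_mem γ (right_mem_Icc.2 hab)]
  exact ⟨⟨S, hS.isArcIn, harc⟩, fun A hA => harc A hA ▸ hS⟩

end Geodesic

section Glue

variable {Z : Type*} {γ δ : ℝ → Z} {c s t u v : ℝ}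

/-- `γ` traversed backwards from time `s` down to `c`, followed by `δ` from `c` on, so that the
result runs from `γ s` at time `2 * c - s` to `δ t` at time `t`. -/
noncomputable def glue (γ δ : ℝ → Z) (c : ℝ) (u : ℝ) : Z :=
  if u ≤ c then γ (2 * c - u) else δ u

lemma glue_of_le (h : u ≤ c) : glue γ δ c u = γ (2 * c - u) := if_pos h

lemma glue_of_lt (h : c < u) : glue γ δ c u = δ u := if_neg h.not_ge

variable [MetricSpace Z]

lemma dist_glue_le (hγ : IsGeodesicOn γ (Icc c s)) (hδ : IsGeodesicOn δ (Icc c t))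
    (hc : γ c = δ c) (hu : u ∈ Icc (2 * c - s) t) (hv : v ∈ Icc (2 * c - s) t) :
    dist (glue γ δ c u) (glue γ δ c v) ≤ |u - v| := by
  wlog huv : u ≤ v generalizing u v with H
  · rw [dist_comm, abs_sub_comm]; exact H hv hu (le_of_not_ge huv)
  rw [abs_sub_comm, abs_of_nonneg (sub_nonneg.2 huv)]
  rcases le_or_gt v c with hvc | hcv
  · rw [glue_of_le (huv.trans hvc), glue_of_le hvc, dist_comm,
      hγ.dist_eq ⟨by linarith, by linarith [hv.1]⟩ ⟨by linarith, by linarith [hu.1]⟩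
        (by linarith)]
    linarith
  rcases le_or_gt u c with huc | hcu
  · rw [glue_of_le huc, glue_of_lt hcv]
    calc dist (γ (2 * c - u)) (δ v) ≤ dist (γ (2 * c - u)) (γ c) + dist (δ c) (δ v) :=
          hc ▸ dist_triangle _ _ _
      _ = v - u := by
        rw [dist_comm, hγ.dist_eq ⟨le_rfl, by linarith [hu.1]⟩
          ⟨by linarith, by linarith [hu.1]⟩ (by linarith),
          hδ.dist_eq ⟨le_rfl, hv.2.trans' hcv.le⟩ ⟨hcv.le, hv.2⟩ hcv.le]
        ring
  · rw [glue_of_lt hcu, glue_of_lt hcv, hδ.dist_eq ⟨hcu.le, hu.2⟩ ⟨hcv.le, hv.2⟩ huv]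

lemma injOn_glue (hγ : IsGeodesicOn γ (Icc c s)) (hδ : IsGeodesicOn δ (Icc c t))
    (hmeet : ∀ σ ∈ Icc c s, ∀ τ ∈ Icc c t, γ σ = δ τ → τ = c) :
    InjOn (glue γ δ c) (Icc (2 * c - s) t) := by
  intro u hu v hv h
  wlog huv : u ≤ v generalizing u v with H
  · exact (H hv hu h.symm (le_of_not_ge huv)).symm
  rcases le_or_gt v c with hvc | hcv
  · rw [glue_of_le (huv.trans hvc), glue_of_le hvc] at h
    linarith [hγ.injOn ⟨by linarith, by linarith [hu.1]⟩
      ⟨by linarith, by linarith [hv.1]⟩ h]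
  rcases le_or_gt u c with huc | hcu
  · rw [glue_of_le huc, glue_of_lt hcv] at h
    exact absurd (hmeet _ ⟨by linarith, by linarith [hu.1]⟩ v ⟨hcv.le, hv.2⟩ h) hcv.ne'
  · rw [glue_of_lt hcu, glue_of_lt hcv] at h
    exact hδ.injOn ⟨hcu.le, hu.2⟩ ⟨hcv.le, hv.2⟩ h

lemma isArcIn_glue (hγ : IsGeodesicOn γ (Icc c s)) (hδ : IsGeodesicOn δ (Icc c t))
    (hcs : c ≤ s) (hct : c ≤ t) (hc : γ c = δ c)
    (hmeet : ∀ σ ∈ Icc c s, ∀ τ ∈ Icc c t, γ σ = δ τ → τ = c) :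
    IsArcIn (γ s) (δ t) (glue γ δ c '' Icc (2 * c - s) t) := by
  refine ⟨_, _, by linarith, glue γ δ c,
    continuousOn_of_dist_le_abs fun u hu v hv => dist_glue_le hγ hδ hc hu hv,
    injOn_glue hγ hδ hmeet, rfl, by rw [glue_of_le (by linarith)]; ring_nf, ?_⟩
  rcases hct.lt_or_eq with hct | rfl
  · exact glue_of_lt hct
  · rw [glue_of_le le_rfl, ← hc]; ring_nf

end Glue

namespace IsRTree

variable {T : Type*} [MetricSpace T]

lemma exists_isGeodesicOn (hT : IsRTree T) (x y : T) :
    ∃ γ : ℝ → T, IsGeodesicOn γ (Icc 0 (dist x y)) ∧ γ 0 = x ∧ γ (dist x y) = y := by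
  obtain ⟨S, hS, -⟩ := (hT x y).1
  obtain ⟨a, b, hab, α, hα : IsGeodesicOn α _, -, rfl, rfl⟩ := (hT x y).2 S hS
  rw [hα.dist_eq (left_mem_Icc.2 hab) (right_mem_Icc.2 hab) hab]
  refine ⟨fun u => α (a + u), fun u hu v hv => ?_, by simp, by simp⟩
  rw [hα (a + u) ⟨by linarith [hu.1], by linarith [hu.2]⟩ (a + v)
    ⟨by linarith [hv.1], by linarith [hv.2]⟩, add_sub_add_left_eq_sub]

lemma eqOn_of_isGeodesicOn (hT : IsRTree T) {γ δ : ℝ → T} {a b : ℝ}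
    (hγ : IsGeodesicOn γ (Icc a b)) (hδ : IsGeodesicOn δ (Icc a b))
    (ha : γ a = δ a) (hb : γ b = δ b) :
    EqOn γ δ (Icc a b) := by
  intro u hu
  have hab := hu.1.trans hu.2
  have hδ' := hδ.isArcIn hab
  rw [← ha, ← hb] at hδ'
  exact hγ.eqOn_of_image_eq hδ ha ((hT _ _).1.unique (hγ.isArcIn hab) hδ') hu

/-- The glued path is an arc, hence in an ℝ-tree a geodesic through `γ c`. -/
lemma dist_eq_of_meet (hT : IsRTree T) {γ δ : ℝ → T} {c s t : ℝ}
    (hγ : IsGeodesicOn γ (Icc c s)) (hδ : IsGeodesicOn δ (Icc c t)) (hcs : c ≤ s)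
    (hct : c ≤ t) (hc : γ c = δ c)
    (hmeet : ∀ σ ∈ Icc c s, ∀ τ ∈ Icc c t, γ σ = δ τ → τ = c) :
    dist (γ s) (δ t) = (s - c) + (t - c) := by
  have harc := isArcIn_glue hγ hδ hcs hct hc hmeet
  have hcA : γ c ∈ glue γ δ c '' Icc (2 * c - s) t :=
    ⟨c, ⟨by linarith, hct⟩, by rw [glue_of_le le_rfl]; ring_nf⟩
  rw [← ((hT _ _).2 _ harc).dist_add_dist_of_mem hcA, dist_comm,
    hγ.dist_eq (left_mem_Icc.2 hcs) (right_mem_Icc.2 hcs) hcs, hc,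
    hδ.dist_eq (left_mem_Icc.2 hct) (right_mem_Icc.2 hct) hct]

/-- `c` is the last time at which the geodesics agree: before it they agree by uniqueness of
arcs, after it `dist_eq_of_meet` applies. -/
lemma exists_branch (hT : IsRTree T) {γ δ : ℝ → T} {L₁ L₂ : ℝ}
    (hγ : IsGeodesicOn γ (Icc 0 L₁)) (hδ : IsGeodesicOn δ (Icc 0 L₂)) (h₀ : γ 0 = δ 0)
    (hL₁ : 0 ≤ L₁) (hL₂ : 0 ≤ L₂) :
    ∃ c ≤ L₁, c ≤ L₂ ∧ ∀ s ∈ Icc 0 L₁, ∀ t ∈ Icc 0 L₂,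
      dist (γ s) (δ t) = s + t - 2 * min s (min t c) := by
  set C := Icc 0 (min L₁ L₂) ∩ (fun u => (γ u, δ u)) ⁻¹' diagonal T
  have hC : IsClosed C := ContinuousOn.preimage_isClosed_of_isClosed
    ((hγ.continuousOn.mono (Icc_subset_Icc_right (min_le_left _ _))).prodMk
      (hδ.continuousOn.mono (Icc_subset_Icc_right (min_le_right _ _)))) isClosed_Icc
    isClosed_diagonal
  have h0C : (0 : ℝ) ∈ C := ⟨left_mem_Icc.2 (le_min hL₁ hL₂), h₀⟩
  have hbdd : BddAbove C := ⟨min L₁ L₂, fun u hu => hu.1.2⟩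
  set c := sSup C
  have hcC : c ∈ C := hC.csSup_mem ⟨0, h0C⟩ hbdd
  have hc₁ : c ≤ L₁ := hcC.1.2.trans (min_le_left _ _)
  have hc₂ : c ≤ L₂ := hcC.1.2.trans (min_le_right _ _)
  have hagree : EqOn γ δ (Icc 0 c) := hT.eqOn_of_isGeodesicOn
    (hγ.mono (Icc_subset_Icc_right hc₁)) (hδ.mono (Icc_subset_Icc_right hc₂)) h₀ hcC.2
  refine ⟨c, hc₁, hc₂, fun s hs t ht => ?_⟩
  rcases le_or_gt s c with hsc | hcs
  · have hm : min s (min t c) = min s t := by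
      rw [← min_assoc, min_eq_left ((min_le_left s t).trans hsc)]
    rw [hagree ⟨hs.1, hsc⟩, hδ s ⟨hs.1, hsc.trans hc₂⟩ t ht, hm, add_sub_two_mul_min]
  rcases le_or_gt t c with htc | hct
  · have hm : min s (min t c) = min s t := by rw [min_eq_left htc]
    rw [← hagree ⟨ht.1, htc⟩, hγ s hs t ⟨ht.1, htc.trans hc₁⟩, hm, add_sub_two_mul_min]
  have hm : min s (min t c) = c := by rw [min_eq_right hct.le, min_eq_right hcs.le]
  rw [hm, hT.dist_eq_of_meet (hγ.mono (Icc_subset_Icc hcC.1.1 hs.2))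
    (hδ.mono (Icc_subset_Icc hcC.1.1 ht.2)) hcs.le hct.le hcC.2 ?_]
  · ring
  intro σ hσ τ hτ h
  have hσ₀ : σ ∈ Icc 0 L₁ := ⟨hcC.1.1.trans hσ.1, hσ.2.trans hs.2⟩
  have hτ₀ : τ ∈ Icc 0 L₂ := ⟨hcC.1.1.trans hτ.1, hτ.2.trans ht.2⟩
  have hστ : σ = τ := by
    have := hγ.dist_eq (left_mem_Icc.2 hL₁) hσ₀ hσ₀.1
    rw [h₀, h, hδ.dist_eq (left_mem_Icc.2 hL₂) hτ₀ hτ₀.1] at this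
    linarith
  subst hστ
  exact le_antisymm (le_csSup hbdd ⟨⟨hσ₀.1, le_min hσ₀.2 hτ₀.2⟩, h⟩) hσ.1

lemma dist_eq_gromovProd (hT : IsRTree T) {γ δ : ℝ → T} {L₁ L₂ s t : ℝ}
    (hγ : IsGeodesicOn γ (Icc 0 L₁)) (hδ : IsGeodesicOn δ (Icc 0 L₂)) (h₀ : γ 0 = δ 0)
    (hs : s ∈ Icc 0 L₁) (ht : t ∈ Icc 0 L₂) :
    dist (γ s) (δ t) = s + t - 2 * min s (min t (gromovProd (γ 0) (γ L₁) (δ L₂))) := by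
  have hL₁ := hs.1.trans hs.2
  have hL₂ := ht.1.trans ht.2
  obtain ⟨c, hc₁, hc₂, hdist⟩ := hT.exists_branch hγ hδ h₀ hL₁ hL₂
  have hc : gromovProd (γ 0) (γ L₁) (δ L₂) = c := by
    have h := hdist L₁ (right_mem_Icc.2 hL₁) L₂ (right_mem_Icc.2 hL₂)
    rw [min_eq_right hc₂, min_eq_right hc₁] at h
    rw [gromovProd, h, hγ.dist_eq (left_mem_Icc.2 hL₁) (right_mem_Icc.2 hL₁) hL₁, h₀,
      hδ.dist_eq (left_mem_Icc.2 hL₂) (right_mem_Icc.2 hL₂) hL₂]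
    ring
  rw [hc, hdist s hs t ht]

end IsRTree

section TreeHullConstruction

variable {X : Type u} [MetricSpace X]

namespace TreeHull

/-- `⟨x, t, _, _⟩` stands for the point at height `t` on the segment from the root to `x`. -/
structure Pre (w : X) : Type u where
  pt : X
  ht : ℝ
  ht_nonneg : 0 ≤ ht
  ht_le : ht ≤ dist w pt

/-- The height of the branch point of the segments from the root to `p` and to `q`. -/
noncomputable def meet (w : X) (p q : Pre w) : ℝ :=
  min p.ht (min q.ht (gromovProd w p.pt q.pt))

variable {w : X}

lemma meet_comm (p q : Pre w) : meet w p q = meet w q p := by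
  rw [meet, meet, gromovProd_comm, min_left_comm]

lemma meet_le_left (p q : Pre w) : meet w p q ≤ p.ht := min_le_left _ _

lemma meet_le_right (p q : Pre w) : meet w p q ≤ q.ht :=
  (min_le_right _ _).trans (min_le_left _ _)

lemma meet_le_gromovProd (p q : Pre w) : meet w p q ≤ gromovProd w p.pt q.pt :=
  (min_le_right _ _).trans (min_le_right _ _)

lemma meet_nonneg (p q : Pre w) : 0 ≤ meet w p q :=
  le_min p.ht_nonneg (le_min q.ht_nonneg (gromovProd_nonneg _ _ _))

lemma meet_self (p : Pre w) : meet w p p = p.ht := by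
  rw [meet, gromovProd_self, min_eq_left p.ht_le, min_self]

lemma min_meet_le [Fact (IsZeroHyperbolicAt w)] (p q r : Pre w) :
    min (meet w p r) (meet w q r) ≤ meet w p q :=
  le_min ((min_le_left _ _).trans (meet_le_left p r))
    (le_min ((min_le_right _ _).trans (meet_le_left q r))
      ((min_le_min (meet_le_gromovProd p r) (meet_le_gromovProd q r)).trans
        ((Fact.out : IsZeroHyperbolicAt w) p.pt q.pt r.pt)))

noncomputable instance [Fact (IsZeroHyperbolicAt w)] : PseudoMetricSpace (Pre w) where
  dist p q := p.ht + q.ht - 2 * meet w p q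
  dist_self p := by simp only [meet_self]; ring
  dist_comm p q := by simp only [meet_comm p q]; ring
  dist_triangle p q r := by
    have h := min_meet_le p r q
    rw [meet_comm r q] at h
    rcases min_le_iff.1 h with h | h <;> linarith [meet_le_right p q, meet_le_left q r]

end TreeHull

def TreeHull (w : X) [Fact (IsZeroHyperbolicAt w)] : Type u :=
  SeparationQuotient (TreeHull.Pre w)

namespace TreeHull

variable (w : X) [Fact (IsZeroHyperbolicAt w)]

noncomputable instance : MetricSpace (TreeHull w) :=
  inferInstanceAs (MetricSpace (SeparationQuotient (Pre w)))

variable {w} in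
noncomputable def mk (p : Pre w) : TreeHull w := SeparationQuotient.mk p

lemma mk_surjective : Function.Surjective (mk : Pre w → TreeHull w) :=
  SeparationQuotient.surjective_mk

lemma dist_mk (p q : Pre w) : dist (mk p) (mk q) = p.ht + q.ht - 2 * meet w p q :=
  SeparationQuotient.dist_mk p q

/-- The segment from the root to `x`, extended constantly outside `[0, d(w, x)]`. -/
noncomputable def ray (x : X) (v : ℝ) : TreeHull w :=
  let t := projIcc 0 (dist w x) dist_nonneg v
  mk ⟨x, t, t.2.1, t.2.2⟩

noncomputable def of (x : X) : TreeHull w := ray w x (dist w x)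

lemma ray_of_mem {x : X} {v : ℝ} (hv : v ∈ Icc 0 (dist w x)) :
    ray w x v = mk ⟨x, v, hv.1, hv.2⟩ := by
  simp only [ray, projIcc_of_mem _ hv]

lemma ray_ht (p : Pre w) : ray w p.pt p.ht = mk p := ray_of_mem w ⟨p.ht_nonneg, p.ht_le⟩

lemma dist_ray {x y : X} {a b : ℝ} (ha : a ∈ Icc 0 (dist w x)) (hb : b ∈ Icc 0 (dist w y)) :
    dist (ray w x a) (ray w y b) = a + b - 2 * min a (min b (gromovProd w x y)) := by
  rw [ray_of_mem w ha, ray_of_mem w hb, dist_mk]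
  rfl

lemma isGeodesicOn_ray (x : X) : IsGeodesicOn (ray w x) (Icc 0 (dist w x)) := fun a ha b hb => by
  rw [dist_ray w ha hb, gromovProd_self, min_eq_left hb.2, add_sub_two_mul_min]

lemma ray_zero (x : X) : ray w x 0 = of w w := by
  apply dist_eq_zero.1
  rw [of, dist_ray w (left_mem_Icc.2 dist_nonneg) (right_mem_Icc.2 dist_nonneg), dist_self,
    min_eq_left (le_min le_rfl (gromovProd_nonneg w x w))]
  ring

lemma isometry_of : Isometry (of w) := Isometry.of_dist_eq fun x y => by
  rw [of, of, dist_ray w (right_mem_Icc.2 dist_nonneg) (right_mem_Icc.2 dist_nonneg),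
    min_eq_right (gromovProd_le_dist_right w x y), min_eq_right (gromovProd_le_dist_left w x y),
    gromovProd]
  ring

lemma gromovProd_of_mk (p q : Pre w) : gromovProd (of w w) (mk p) (mk q) = meet w p q := by
  have h : ∀ p : Pre w, dist (of w w) (mk p) = p.ht := fun p => by
    rw [← ray_zero w p.pt, ← ray_ht, (isGeodesicOn_ray w p.pt).dist_eq
      (left_mem_Icc.2 dist_nonneg) ⟨p.ht_nonneg, p.ht_le⟩ p.ht_nonneg, sub_zero]
  rw [gromovProd, h, h, dist_mk]
  ring

lemma isZeroHyperbolicAt (r : TreeHull w) : IsZeroHyperbolicAt r := by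
  refine IsZeroHyperbolicAt.of_base (w := of w w) (fun a b c => ?_) r
  obtain ⟨p, rfl⟩ := mk_surjective w a
  obtain ⟨q, rfl⟩ := mk_surjective w b
  obtain ⟨r, rfl⟩ := mk_surjective w c
  simp only [gromovProd_of_mk]
  exact min_meet_le p q r

lemma dist_ray_of_meet_le {p q : Pre w} {a b : ℝ} (ha : a ∈ Icc (meet w p q) p.ht)
    (hb : b ∈ Icc (meet w p q) q.ht) :
    dist (ray w p.pt a) (ray w q.pt b) = a + b - 2 * meet w p q := by
  rw [dist_ray w ⟨(meet_nonneg p q).trans ha.1, ha.2.trans p.ht_le⟩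
    ⟨(meet_nonneg p q).trans hb.1, hb.2.trans q.ht_le⟩]
  congr 2
  exact le_antisymm (min_le_min ha.2 (min_le_min_right _ hb.2))
    (le_min ha.1 (le_min hb.1 (meet_le_gromovProd p q)))

/-- The segment from `mk p` to `mk q` descends from `p` to the branch point at height
`meet w p q` (reached at time `0`) and climbs from there to `q`. -/
lemma exists_isGeodesicSegmentIn (p q : Pre w) : ∃ S, IsGeodesicSegmentIn (mk p) (mk q) S := by
  set m := meet w p q
  set κ : ℝ → TreeHull w := fun u => if u ≤ 0 then ray w p.pt (m - u) else ray w q.pt (m + u)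
  have hκp : ∀ u ≤ 0, κ u = ray w p.pt (m - u) := fun u hu => if_pos hu
  have hκq : ∀ u, 0 < u → κ u = ray w q.pt (m + u) := fun u hu => if_neg hu.not_ge
  set I := Icc (m - p.ht) (q.ht - m)
  have hIp : ∀ u ∈ I, u ≤ 0 → m - u ∈ Icc m p.ht := fun u hu hu0 =>
    ⟨by linarith, by linarith [hu.1]⟩
  have hIq : ∀ u ∈ I, 0 < u → m + u ∈ Icc m q.ht := fun u hu hu0 =>
    ⟨by linarith, by linarith [hu.2]⟩
  have hsub : ∀ r : Pre w, Icc m r.ht ⊆ Icc 0 (dist w r.pt) :=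
    fun r => Icc_subset_Icc (meet_nonneg p q) r.ht_le
  have hκ_dist : ∀ u ∈ I, ∀ v ∈ I, u ≤ v → dist (κ u) (κ v) = v - u := by
    intro u hu v hv huv
    rcases le_or_gt v 0 with hv0 | hv0
    · rw [hκp u (huv.trans hv0), hκp v hv0, dist_comm, (isGeodesicOn_ray w p.pt).dist_eq
        (hsub p (hIp v hv hv0)) (hsub p (hIp u hu (huv.trans hv0))) (by linarith)]
      ring
    rcases le_or_gt u 0 with hu0 | hu0
    · rw [hκp u hu0, hκq v hv0, dist_ray_of_meet_le w (hIp u hu hu0) (hIq v hv hv0)]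
      ring
    · rw [hκq u hu0, hκq v hv0, (isGeodesicOn_ray w q.pt).dist_eq
        (hsub q (hIq u hu hu0)) (hsub q (hIq v hv hv0)) (by linarith)]
      ring
  have hκ : IsGeodesicOn κ I := fun u hu v hv => by
    rcases le_total u v with huv | hvu
    · rw [hκ_dist u hu v hv huv, abs_sub_comm, abs_of_nonneg (sub_nonneg.2 huv)]
    · rw [dist_comm, hκ_dist v hv u hu hvu, abs_of_nonneg (sub_nonneg.2 hvu)]
  have hκp₀ : κ (m - p.ht) = mk p := by
    rw [hκp _ (by linarith [meet_le_left p q]), sub_sub_cancel, ray_ht]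
  have hκq₀ : κ (q.ht - m) = mk q := by
    rcases (sub_nonneg.2 (meet_le_right p q)).lt_or_eq with h | h
    · rw [hκq _ h, add_sub_cancel, ray_ht]
    · rw [← h, hκp 0 le_rfl, sub_zero, ← ray_ht]
      apply dist_eq_zero.1
      rw [dist_ray_of_meet_le w ⟨le_rfl, meet_le_left p q⟩ ⟨meet_le_right p q, le_rfl⟩]
      linarith
  exact ⟨_, _, _, by linarith [meet_le_left p q, meet_le_right p q], κ, hκ, rfl, hκp₀,
    hκq₀⟩

lemma isRTree : IsRTree (TreeHull w) :=
  isRTree_of_isZeroHyperbolicAt (isZeroHyperbolicAt w) fun x y => by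
    obtain ⟨p, rfl⟩ := mk_surjective w x
    obtain ⟨q, rfl⟩ := mk_surjective w y
    exact exists_isGeodesicSegmentIn w p q

lemma eq_univ_of_isConnected {S : Set (TreeHull w)} (hS : IsConnected S)
    (hsub : range (of w) ⊆ S) : S = univ := by
  refine eq_univ_of_forall fun z => ?_
  obtain ⟨p, rfl⟩ := mk_surjective w z
  have h := (isGeodesicOn_ray w p.pt).dist_add_dist ⟨p.ht_nonneg, p.ht_le⟩
  rw [ray_zero, ray_ht] at h
  exact (isZeroHyperbolicAt w _).mem_of_dist_add_dist_eq hS.isPreconnected (hsub ⟨w, rfl⟩)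
    (hsub ⟨p.pt, rfl⟩) h

variable {T : Type*} [MetricSpace T]

lemma exists_isometry_comp_of (hT : IsRTree T) {j : X → T} (hj : Isometry j) :
    ∃ k : TreeHull w → T, Isometry k ∧ k ∘ of w = j := by
  choose γ hγ hγ₀ hγ₁ using fun x => hT.exists_isGeodesicOn (j w) (j x)
  simp only [hj.dist_eq] at hγ hγ₁
  have hdist : ∀ p q : Pre w, dist (γ p.pt p.ht) (γ q.pt q.ht) = dist (mk p) (mk q) := by
    intro p q
    rw [hT.dist_eq_gromovProd (hγ p.pt) (hγ q.pt) ((hγ₀ p.pt).trans (hγ₀ q.pt).symm)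
      ⟨p.ht_nonneg, p.ht_le⟩ ⟨q.ht_nonneg, q.ht_le⟩, hγ₀, hγ₁, hγ₁, hj.gromovProd_eq,
      dist_mk]
    rfl
  let k : TreeHull w → T := SeparationQuotient.lift (fun p : Pre w => γ p.pt p.ht) fun p q h =>
    dist_eq_zero.1 ((hdist p q).trans (dist_eq_zero.2 (SeparationQuotient.mk_eq_mk.2 h)))
  have hk : ∀ p, k (mk p) = γ p.pt p.ht := SeparationQuotient.lift_mk _
  refine ⟨k, Isometry.of_dist_eq fun z₁ z₂ => ?_, funext fun x => ?_⟩
  · obtain ⟨p, rfl⟩ := mk_surjective w z₁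
    obtain ⟨q, rfl⟩ := mk_surjective w z₂
    rw [hk, hk, hdist]
  · rw [Function.comp_apply, of, ray_of_mem w (right_mem_Icc.2 dist_nonneg), hk, hγ₁]

/-- Both map the segment from the root to `x` isometrically onto the unique geodesic between
the same two points. -/
lemma isometry_ext (hT : IsRTree T) {k₁ k₂ : TreeHull w → T} (hk₁ : Isometry k₁)
    (hk₂ : Isometry k₂) (h : k₁ ∘ of w = k₂ ∘ of w) : k₁ = k₂ := by
  funext z
  obtain ⟨p, rfl⟩ := mk_surjective w z
  have hray := isGeodesicOn_ray w p.pt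
  have heq := hT.eqOn_of_isGeodesicOn (hk₁.isGeodesicOn_comp hray) (hk₂.isGeodesicOn_comp hray)
    (by simp only [Function.comp_apply, ray_zero]; exact congrFun h w) (congrFun h p.pt)
    ⟨p.ht_nonneg, p.ht_le⟩
  rwa [Function.comp_apply, Function.comp_apply, ray_ht] at heq

end TreeHull

end TreeHullConstruction

/-- "Connecting the dots": every 0-hyperbolic metric space embeds isometrically in an
essentially unique minimal ℝ-tree. -/
theorem connecting_the_dots (X : Type u) [MetricSpace X] (w : X)
    (h0 : ∀ x y z : X, gromovProd w x y ≥ min (gromovProd w x z) (gromovProd w y z)) :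
    ∃ (T : Type u) (mT : MetricSpace T), @IsTreeHull X _ T mT := by
  have : Fact (IsZeroHyperbolicAt w) := ⟨h0⟩
  refine ⟨TreeHull w, inferInstance, TreeHull.isRTree w, TreeHull.of w, TreeHull.isometry_of w,
    fun S hS hsub => TreeHull.eq_univ_of_isConnected w hS hsub, fun T' _ hT' j hj => ?_⟩
  obtain ⟨k, hk, hkj⟩ := TreeHull.exists_isometry_comp_of w hT' hj
  exact ⟨k, ⟨hk, hkj⟩, fun k' ⟨hk', hk'j⟩ =>
    TreeHull.isometry_ext w hT' hk' hk (hk'j.trans hkj.symm)⟩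
end

section
/- Let a group G act by isometries on an ℝ-tree T, and let T₁ and T₂ be stable subtrees of T whose intersection T₁ ∩ T₂ contains more than one point. Then T₁ ∪ T₂ is a stable subtree of T. -/
/-- A subset of an ℝ-tree is *nondegenerate* if it contains more than one point. -/
def Nondegenerate {T : Type*} (S : Set T) : Prop :=
  ∃ x ∈ S, ∃ y ∈ S, x ≠ y

/-- The pointwise stabilizer `Fix(S) = {g : G | g·x = x for all x ∈ S}` of a subset of an
ℝ-tree under an isometric action `ρ`. -/
def fixOf {G T : Type*} [Group G] [MetricSpace T] (ρ : G →* (T ≃ᵢ T)) (S : Set T) :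
    Set G :=
  {g : G | ∀ x ∈ S, ρ g x = x}

/-- A *stable subtree* for the action `ρ`: a nondegenerate subtree (nonempty connected
subset with more than one point) `S` such that every nondegenerate subtree of `S` has the
same pointwise stabilizer as `S`. -/
def IsStableSubtree {G T : Type*} [Group G] [MetricSpace T] (ρ : G →* (T ≃ᵢ T))
    (S : Set T) : Prop :=
  IsConnected S ∧ Nondegenerate S ∧
    ∀ S' : Set T, S' ⊆ S → IsConnected S' → Nondegenerate S' → fixOf ρ S' = fixOf ρ S

/-!
In an ℝ-tree a connected set `A` contains the arc between any two of its points `x, y`: if a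
point `p` of that arc were missing from `A`, the points `w` lying behind `p` as seen from `x`
(those with `d(x,p) + d(p,w) = d(x,w)`) would form a closed set whose trace on `T \ {p}` is
also open (the tripod lemma shows that a ball around such a `w` of radius `d(w,p)` stays
behind `p`), separating `y` from `x` inside `A`. Consequently the intersection of two
subtrees is a subtree.

So `T₁ ∩ T₂` is a nondegenerate subtree of both `T₁` and `T₂`, whence
`Fix T₁ = Fix (T₁ ∩ T₂) = Fix T₂ = Fix (T₁ ∪ T₂)`. A nondegenerate subtree `S ⊆ T₁ ∪ T₂` is
infinite, so some `S ∩ Tᵢ` is a nondegenerate subtree of `Tᵢ`, and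
`Fix S ⊆ Fix (S ∩ Tᵢ) = Fix Tᵢ = Fix (T₁ ∪ T₂) ⊆ Fix S`.
-/

open Set

section RTree

variable {T : Type*} [MetricSpace T]

def IsometricOn (α : ℝ → T) (a b : ℝ) : Prop :=
  ∀ s ∈ Icc a b, ∀ t ∈ Icc a b, dist (α s) (α t) = |s - t|

namespace IsometricOn

variable {α : ℝ → T} {a b : ℝ}

theorem continuousOn (hα : IsometricOn α a b) : ContinuousOn α (Icc a b) :=
  (LipschitzOnWith.of_dist_le_mul fun s hs t ht => by
    rw [hα s hs t ht, Real.dist_eq, NNReal.coe_one, one_mul]).continuousOn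

theorem dist_zero_left (hα : IsometricOn α 0 b) {t : ℝ} (ht : t ∈ Icc 0 b) :
    dist (α 0) (α t) = t := by
  rw [hα 0 ⟨le_rfl, ht.1.trans ht.2⟩ t ht, zero_sub, abs_neg, abs_of_nonneg ht.1]

theorem exists_arc_of_branch {δ β : ℝ → T} {c c' t₀ : ℝ} (hδ : IsometricOn δ 0 c)
    (hβ : IsometricOn β 0 c') (h0 : δ 0 = β 0) (ht₀ : t₀ ∈ Icc 0 c) (ht₀' : t₀ ∈ Icc 0 c')
    (hm : δ t₀ = β t₀)
    (hsplit : ∀ s, 0 < s → t₀ + s ≤ c → t₀ + s ≤ c' → δ (t₀ + s) ≠ β (t₀ + s)) :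
    ∃ S, IsArcIn (δ c) (β c') S ∧ δ t₀ ∈ S := by
  obtain ⟨ht₀0, ht₀c⟩ := ht₀
  obtain ⟨-, ht₀c'⟩ := ht₀'
  -- Walk back from `δ c` to the branch point along `δ`, then out to `β c'` along `β`.
  set γ : ℝ → T := fun u => if u ≤ 0 then δ (t₀ - u) else β (t₀ + u)
  have hγx : ∀ u ∈ Icc (t₀ - c) (c' - t₀), dist (δ 0) (γ u) = t₀ + |u| := by
    intro u hu
    rcases le_or_gt u 0 with hu0 | hu0
    · simp only [γ, if_pos hu0, abs_of_nonpos hu0]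
      rw [hδ.dist_zero_left ⟨by linarith, by linarith [hu.1]⟩, sub_eq_add_neg]
    · simp only [γ, if_neg (not_le.2 hu0), abs_of_pos hu0, h0]
      rw [hβ.dist_zero_left ⟨by linarith, by linarith [hu.2]⟩]
  have hγcont : ContinuousOn γ (Icc (t₀ - c) (c' - t₀)) := by
    have hneg : ContinuousOn γ (Icc (t₀ - c) 0) :=
      (hδ.continuousOn.comp (continuous_sub_left t₀).continuousOn fun u hu =>
        ⟨by linarith [hu.2], by linarith [hu.1]⟩).congr fun u hu => by simp [γ, hu.2]
    have hpos : ContinuousOn γ (Icc 0 (c' - t₀)) :=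
      (hβ.continuousOn.comp (continuous_const_add t₀).continuousOn fun u hu =>
        ⟨by linarith [hu.1], by linarith [hu.2]⟩).congr fun u hu => by
          rcases hu.1.eq_or_lt with rfl | hu0
          · simp [γ, hm]
          · simp [γ, not_le.2 hu0]
    rw [← Icc_union_Icc_eq_Icc (b := 0) (by linarith) (by linarith)]
    exact hneg.union_of_isClosed hpos isClosed_Icc isClosed_Icc
  have hγinj : InjOn γ (Icc (t₀ - c) (c' - t₀)) := by
    intro u hu v hv huv
    have habs : |u| = |v| := by linarith [hγx u hu, hγx v hv, congrArg (dist (δ 0)) huv]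
    rcases abs_eq_abs.1 habs with rfl | rfl
    · rfl
    rcases lt_trichotomy v 0 with hv0 | rfl | hv0
    · refine absurd ?_ (hsplit (-v) (by linarith) (by linarith [hv.1]) (by linarith [hu.2]))
      simpa [γ, hv0.le, not_le.2 (neg_pos.2 hv0), sub_eq_add_neg] using huv.symm
    · simp
    · refine absurd ?_ (hsplit v hv0 (by linarith [hu.1]) (by linarith [hv.2]))
      simpa [γ, (neg_neg_iff_pos.2 hv0).le, not_le.2 hv0] using huv
  refine ⟨γ '' Icc (t₀ - c) (c' - t₀),
    ⟨_, _, by linarith, γ, hγcont, hγinj, rfl, ?_, ?_⟩,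
    0, ⟨by linarith, by linarith⟩, by simp [γ]⟩
  · simp [γ, show t₀ - c ≤ 0 by linarith]
  · rcases ht₀c'.eq_or_lt with he | hlt
    · simp only [γ, ← he, sub_self, le_refl, if_true, sub_zero]
      rw [hm]
    · simp [γ, not_le.2 (sub_pos.2 hlt)]

end IsometricOn

namespace IsRTree

theorem exists_segment (h : IsRTree T) (x y : T) :
    ∃ δ : ℝ → T, IsometricOn δ 0 (dist x y) ∧ δ 0 = x ∧ δ (dist x y) = y ∧
      ∀ S, IsArcIn x y S → S = δ '' Icc 0 (dist x y) := by
  obtain ⟨⟨S, hS, huniq⟩, hgeo⟩ := h x y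
  obtain ⟨a, b, hab, α, hα, rfl, rfl, rfl⟩ := hgeo S hS
  have hlen : dist (α a) (α b) = b - a := by
    rw [hα a ⟨le_rfl, hab⟩ b ⟨hab, le_rfl⟩, abs_sub_comm, abs_of_nonneg (sub_nonneg.2 hab)]
  refine ⟨fun t => α (a + t), fun s hs t ht => ?_, by simp, by simp [hlen], fun S' hS' => ?_⟩
  · rw [hα (a + s) ⟨by linarith [hs.1], by linarith [hs.2]⟩
      (a + t) ⟨by linarith [ht.1], by linarith [ht.2]⟩, add_sub_add_left_eq_sub]
  · rw [huniq S' hS', hlen, ← image_image α (a + ·), image_const_add_Icc, add_zero,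
      add_sub_cancel]

theorem dist_add_dist_of_mem_arc (h : IsRTree T) {x y p : T} {S : Set T} (hS : IsArcIn x y S)
    (hp : p ∈ S) : dist x p + dist p y = dist x y := by
  obtain ⟨a, b, hab, α, hα, rfl, rfl, rfl⟩ := (h x y).2 S hS
  obtain ⟨s, hs, rfl⟩ := hp
  rw [hα a ⟨le_rfl, hab⟩ s hs, hα s hs b ⟨hab, le_rfl⟩, hα a ⟨le_rfl, hab⟩ b ⟨hab, le_rfl⟩,
    abs_of_nonpos (by linarith [hs.1]), abs_of_nonpos (by linarith [hs.2]),
    abs_of_nonpos (by linarith)]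
  ring

theorem dist_eq_abs_sub_of_mem_arc (h : IsRTree T) {x y p q : T} {S : Set T}
    (hS : IsArcIn x y S) (hp : p ∈ S) (hq : q ∈ S) :
    dist p q = |dist x p - dist x q| := by
  obtain ⟨δ, hδ, rfl, -, huniq⟩ := h.exists_segment x y
  rw [huniq S hS] at hp hq
  obtain ⟨s, hs, rfl⟩ := hp
  obtain ⟨t, ht, rfl⟩ := hq
  rw [hδ s hs t ht, hδ.dist_zero_left hs, hδ.dist_zero_left ht]

theorem exists_tripod (h : IsRTree T) (x z z' : T) :
    ∃ m : T, (∀ S, IsArcIn x z S → m ∈ S) ∧ dist x m + dist m z' = dist x z' ∧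
      dist z m + dist m z' = dist z z' := by
  obtain ⟨δ, hδ, hδ0, hδ1, hδS⟩ := h.exists_segment x z
  obtain ⟨β, hβ, hβ0, hβ1, -⟩ := h.exists_segment x z'
  set c := dist x z
  set c' := dist x z'
  set J := Icc 0 (min c c') ∩ (fun t => (δ t, β t)) ⁻¹' {q | q.1 = q.2}
  have hJ0 : (0 : ℝ) ∈ J := ⟨⟨le_rfl, le_min dist_nonneg dist_nonneg⟩, hδ0.trans hβ0.symm⟩
  have hJbdd : BddAbove J := ⟨min c c', fun t ht => ht.1.2⟩
  have hJclosed : IsClosed J :=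
    ((hδ.continuousOn.mono (Icc_subset_Icc_right (min_le_left _ _))).prodMk
      (hβ.continuousOn.mono (Icc_subset_Icc_right (min_le_right _ _)))
      ).preimage_isClosed_of_isClosed isClosed_Icc isClosed_diagonal
  -- `t₀` is the length of the common initial piece of the segments `[x,z]` and `[x,z']`.
  set t₀ := sSup J
  obtain ⟨⟨ht₀0, ht₀c⟩, hm⟩ : t₀ ∈ J := hJclosed.csSup_mem ⟨0, hJ0⟩ hJbdd
  have ht₀ : t₀ ∈ Icc 0 c := ⟨ht₀0, ht₀c.trans (min_le_left _ _)⟩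
  have ht₀' : t₀ ∈ Icc 0 c' := ⟨ht₀0, ht₀c.trans (min_le_right _ _)⟩
  replace hm : δ t₀ = β t₀ := hm
  obtain ⟨S, hS, hmS⟩ := hδ.exists_arc_of_branch hβ (hδ0.trans hβ0.symm) ht₀ ht₀' hm
    fun s hs hsc hsc' he => by
      linarith [le_csSup hJbdd (show t₀ + s ∈ J from ⟨⟨by linarith, le_min hsc hsc'⟩, he⟩)]
  rw [hδ1, hβ1] at hS
  refine ⟨δ t₀, fun S hS => hδS S hS ▸ mem_image_of_mem δ ht₀, ?_,
    h.dist_add_dist_of_mem_arc hS hmS⟩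
  rw [hm, ← hβ0, hβ.dist_zero_left ht₀', ← hβ1, hβ t₀ ht₀' c' ⟨dist_nonneg, le_rfl⟩,
    abs_of_nonpos (by linarith [ht₀'.2])]
  ring

theorem mem_arc_of_dist_add_dist (h : IsRTree T) {x z p : T} {S : Set T} (hS : IsArcIn x z S)
    (hp : dist x p + dist p z = dist x z) : p ∈ S := by
  obtain ⟨m, hmS, hxm, hzm⟩ := h.exists_tripod x z p
  have hmz := h.dist_add_dist_of_mem_arc hS (hmS S hS)
  have hmp : dist m p = 0 := by linarith [dist_comm p z, dist_comm z m]
  exact dist_eq_zero.1 hmp ▸ hmS S hS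

theorem dist_add_dist_eq_of_dist_lt (h : IsRTree T) {x p z z' : T}
    (hz : dist x p + dist p z = dist x z) (hz' : dist z z' < dist z p) :
    dist x p + dist p z' = dist x z' := by
  obtain ⟨S, hS, -⟩ := (h x z).1
  obtain ⟨m, hmS, hxm, hzm⟩ := h.exists_tripod x z z'
  have hxz := h.dist_add_dist_of_mem_arc hS (hmS S hS)
  -- The tripod centre `m` lies on `[x,z]` beyond `p`, as `d(m,z) ≤ d(z,z') < d(z,p)`.
  have hpm := h.dist_eq_abs_sub_of_mem_arc hS (h.mem_arc_of_dist_add_dist hS hz) (hmS S hS)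
  rw [abs_of_nonpos (by linarith [dist_comm z m, dist_comm z p, dist_nonneg (x := m) (y := z')]),
    neg_sub] at hpm
  linarith [dist_triangle x p z', dist_triangle p m z']

theorem arc_subset_of_isPreconnected (h : IsRTree T) {A : Set T} (hA : IsPreconnected A)
    {x y : T} (hx : x ∈ A) (hy : y ∈ A) {S : Set T} (hS : IsArcIn x y S) : S ⊆ A := by
  intro p hpS
  by_contra hpA
  have hxp : 0 < dist x p := dist_pos.2 fun e => hpA (e ▸ hx)
  set W := {w : T | dist x p + dist p w = dist x w}
  set U := ⋃ w ∈ W, Metric.ball w (dist w p)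
  have hUW : U ⊆ W := by
    simp only [U, iUnion_subset_iff]
    exact fun w hw w' hw' =>
      h.dist_add_dist_eq_of_dist_lt hw (by rwa [dist_comm, ← Metric.mem_ball])
  have hWclosed : IsClosed W := isClosed_eq (by fun_prop) (by fun_prop)
  have hcover : A ⊆ U ∪ Wᶜ := fun w hw => by
    by_cases hwW : w ∈ W
    · exact Or.inl (mem_biUnion hwW (Metric.mem_ball_self (dist_pos.2 fun e => hpA (e ▸ hw))))
    · exact Or.inr hwW
  have hyU : y ∈ U :=
    mem_biUnion (h.dist_add_dist_of_mem_arc hS hpS)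
      (Metric.mem_ball_self (dist_pos.2 fun e => hpA (e ▸ hy)))
  have hxW : x ∉ W := fun hxW => by
    have : dist x p + dist p x = 0 := (hxW : _).trans (dist_self x)
    linarith [dist_nonneg (x := p) (y := x)]
  obtain ⟨w, -, hwU, hwW⟩ :=
    hA U Wᶜ (isOpen_biUnion fun _ _ => Metric.isOpen_ball) hWclosed.isOpen_compl hcover
      ⟨y, hy, hyU⟩ ⟨x, hx, hxW⟩
  exact hwW (hUW hwU)

theorem isPreconnected_inter (h : IsRTree T) {A B : Set T} (hA : IsPreconnected A)
    (hB : IsPreconnected B) : IsPreconnected (A ∩ B) := by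
  refine isPreconnected_of_forall_pair fun x hx y hy => ?_
  obtain ⟨δ, hδ, hδ0, hδ1, hδS⟩ := h.exists_segment x y
  obtain ⟨S, hS, -⟩ := (h x y).1
  refine ⟨S, subset_inter (h.arc_subset_of_isPreconnected hA hx.1 hy.1 hS)
    (h.arc_subset_of_isPreconnected hB hx.2 hy.2 hS), ?_, ?_, ?_⟩
  all_goals rw [hδS S hS]
  · exact ⟨0, ⟨le_rfl, dist_nonneg⟩, hδ0⟩
  · exact ⟨dist x y, ⟨dist_nonneg, le_rfl⟩, hδ1⟩
  · exact isPreconnected_Icc.image δ hδ.continuousOn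

end IsRTree

theorem IsPreconnected.nontrivial_inter_or {X : Type*} [TopologicalSpace X] [T1Space X]
    {S A B : Set X} (hS : IsPreconnected S) (hS' : S.Nontrivial) (hAB : S ⊆ A ∪ B) :
    (S ∩ A).Nontrivial ∨ (S ∩ B).Nontrivial := by
  by_contra! hsmall
  refine hS.infinite_of_nontrivial hS' ((hsmall.1.finite.union hsmall.2.finite).subset ?_)
  rw [← inter_union_distrib_left]
  exact subset_inter subset_rfl hAB

section Stabilizer

variable {G : Type*} [Group G] (ρ : G →* (T ≃ᵢ T))

theorem fixOf_anti {A B : Set T} (hAB : A ⊆ B) : fixOf ρ B ⊆ fixOf ρ A :=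
  fun _ hg x hx => hg x (hAB hx)

theorem fixOf_union (A B : Set T) : fixOf ρ (A ∪ B) = fixOf ρ A ∩ fixOf ρ B := by
  ext g
  simp only [fixOf, mem_ofPred_eq, mem_union, or_imp, forall_and, mem_inter_iff]

theorem IsStableSubtree.fixOf_eq_of_nondegenerate_inter (h : IsRTree T) {T' S U : Set T}
    (hT' : IsStableSubtree ρ T') (hS : IsConnected S) (hSU : S ⊆ U)
    (hU : fixOf ρ U = fixOf ρ T') (hST : Nondegenerate (S ∩ T')) : fixOf ρ S = fixOf ρ U := by
  have hST_conn : IsConnected (S ∩ T') :=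
    ⟨Set.Nontrivial.nonempty hST, h.isPreconnected_inter hS.isPreconnected hT'.1.isPreconnected⟩
  refine Subset.antisymm ?_ (fixOf_anti ρ hSU)
  calc fixOf ρ S ⊆ fixOf ρ (S ∩ T') := fixOf_anti ρ inter_subset_left
    _ = fixOf ρ T' := hT'.2.2 _ inter_subset_right hST_conn hST
    _ = fixOf ρ U := hU.symm

end Stabilizer

end RTree

/-- If two stable subtrees of an ℝ-tree meet in more than one point, their union is a
stable subtree. -/
theorem union_of_stable_subtrees {T : Type*} [MetricSpace T] (h : IsRTree T)
    {G : Type*} [Group G] (ρ : G →* (T ≃ᵢ T)) (T₁ T₂ : Set T)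
    (h₁ : IsStableSubtree ρ T₁) (h₂ : IsStableSubtree ρ T₂)
    (hint : Nondegenerate (T₁ ∩ T₂)) :
    IsStableSubtree ρ (T₁ ∪ T₂) := by
  have hI : IsConnected (T₁ ∩ T₂) :=
    ⟨Set.Nontrivial.nonempty hint, h.isPreconnected_inter h₁.1.isPreconnected h₂.1.isPreconnected⟩
  have hfix₁ : fixOf ρ (T₁ ∩ T₂) = fixOf ρ T₁ := h₁.2.2 _ inter_subset_left hI hint
  have hfix₂ : fixOf ρ (T₁ ∩ T₂) = fixOf ρ T₂ := h₂.2.2 _ inter_subset_right hI hint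
  have hfix : fixOf ρ (T₁ ∪ T₂) = fixOf ρ (T₁ ∩ T₂) := by
    rw [fixOf_union, ← hfix₁, ← hfix₂, inter_self]
  refine ⟨IsConnected.union hI.nonempty h₁.1 h₂.1,
    Set.Nontrivial.mono hint (inter_subset_left.trans subset_union_left),
    fun S hS hS_conn hS_nd => ?_⟩
  rcases hS_conn.isPreconnected.nontrivial_inter_or hS_nd hS with hS₁ | hS₂
  · exact h₁.fixOf_eq_of_nondegenerate_inter ρ h hS_conn hS (hfix.trans hfix₁) hS₁
  · exact h₂.fixOf_eq_of_nondegenerate_inter ρ h hS_conn hS (hfix.trans hfix₂) hS₂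
end

section
/- Let a group G act by isometries on an ℝ-tree T. Then every stable subtree of T is contained in a unique maximal stable subtree, i.e., a stable subtree that is not properly contained in any other stable subtree. -/
/-! The stable subtrees containing `S` all have the pointwise stabilizer of `S`, and their union
`M` is again stable, hence the unique maximal one. For stability of `M`: if `g` fixes distinct
points `x ∈ A` and `y ∈ B` of `M`, it fixes the arc `[x, y]`, which lies in the connected set
`A ∪ B`; an interior point `m` of `[x, y]` lies in `A` or in `B`, so `g` fixes the nondegenerate
arc `[x, m] ⊆ A` or `[m, y] ⊆ B`, and hence fixes `A` or `B`. -/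

open Set Metric

section Arcs

variable {T : Type*} [MetricSpace T]

theorem IsArcIn.exists_start {x y : T} {S : Set T} (hS : IsArcIn x y S) (a' : ℝ) :
    ∃ b', a' ≤ b' ∧ ∃ α : ℝ → T, ContinuousOn α (Icc a' b') ∧ InjOn α (Icc a' b') ∧
      α '' Icc a' b' = S ∧ α a' = x ∧ α b' = y := by
  obtain ⟨a, b, hab, α, hc, hi, rfl, rfl, rfl⟩ := hS
  have hshift : (· + (a - a')) '' Icc a' (b - a + a') = Icc a b := by
    rw [image_add_const_Icc]; congr 1 <;> ring
  have hmaps : MapsTo (· + (a - a')) (Icc a' (b - a + a')) (Icc a b) :=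
    fun t ht => hshift.subset (mem_image_of_mem _ ht)
  refine ⟨b - a + a', by linarith, fun t => α (t + (a - a')), ?_, ?_, ?_, by simp, by simp⟩
  · exact hc.comp (continuousOn_id.add continuousOn_const) hmaps
  · exact hi.comp (add_left_injective _).injOn hmaps
  · rw [← hshift, image_image]

theorem IsArcIn.union {u w v : T} {A B : Set T} (hA : IsArcIn u w A) (hB : IsArcIn w v B)
    (hAB : A ∩ B ⊆ {w}) : IsArcIn u v (A ∪ B) := by
  obtain ⟨a, b, hab, α, hαc, hαi, rfl, rfl, rfl⟩ := hA
  obtain ⟨c, hbc, β, hβc, hβi, rfl, hβb, rfl⟩ := hB.exists_start b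
  set δ : ℝ → T := fun t => if t ≤ b then α t else β t
  have hδα : EqOn δ α (Icc a b) := fun t ht => if_pos ht.2
  have hδβ : EqOn δ β (Icc b c) := fun t ht => by
    rcases ht.1.eq_or_lt with rfl | hlt
    · exact (if_pos le_rfl).trans hβb.symm
    · exact if_neg (not_le.2 hlt)
  refine ⟨a, c, hab.trans hbc, δ, ?_, ?_, ?_, hδα ⟨le_rfl, hab⟩, hδβ ⟨hbc, le_rfl⟩⟩
  · rw [← Icc_union_Icc_eq_Icc hab hbc]
    exact ((hαc.congr hδα).union_of_isClosed (hβc.congr hδβ) isClosed_Icc isClosed_Icc)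
  · rw [← Icc_union_Ioc_eq_Icc hab hbc,
      injOn_union (disjoint_left.2 fun t ht ht' => (not_lt.2 ht.2) ht'.1)]
    refine ⟨hαi.congr hδα.symm,
      (hβi.mono Ioc_subset_Icc_self).congr (hδβ.mono Ioc_subset_Icc_self).symm,
      fun s hs t ht hst => ?_⟩
    have ht' : t ∈ Icc b c := Ioc_subset_Icc_self ht
    rw [hδα hs, hδβ ht'] at hst
    have hw : β t = β b :=
      (hAB ⟨hst ▸ mem_image_of_mem α hs, mem_image_of_mem β ht'⟩).trans hβb.symm
    exact ht.1.ne' (hβi ht' ⟨le_rfl, hbc⟩ hw)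
  · rw [← Icc_union_Icc_eq_Icc hab hbc, image_union, hδα.image_eq, hδβ.image_eq]

theorem IsArcIn.subarc {a b : ℝ} {α : ℝ → T} (hc : ContinuousOn α (Icc a b))
    (hi : InjOn α (Icc a b)) {s t : ℝ} (hst : s ≤ t) (hs : a ≤ s) (ht : t ≤ b) :
    IsArcIn (α s) (α t) (α '' Icc s t) :=
  ⟨s, t, hst, α, hc.mono (Icc_subset_Icc hs ht), hi.mono (Icc_subset_Icc hs ht), rfl, rfl, rfl⟩

theorem IsGeodesicSegmentIn.dist_add_dist {x y z : T} {S : Set T}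
    (hS : IsGeodesicSegmentIn x y S) (hz : z ∈ S) : dist x z + dist z y = dist x y := by
  obtain ⟨a, b, hab, α, hd, rfl, rfl, rfl⟩ := hS
  obtain ⟨t, ht, rfl⟩ := hz
  rw [hd a ⟨le_rfl, hab⟩ t ht, hd t ht b ⟨hab, le_rfl⟩, hd a ⟨le_rfl, hab⟩ b ⟨hab, le_rfl⟩,
    abs_of_nonpos (by linarith [ht.1]), abs_of_nonpos (by linarith [ht.2]),
    abs_of_nonpos (by linarith)]
  ring

theorem IsGeodesicSegmentIn.injOn_dist {x y : T} {S : Set T} (hS : IsGeodesicSegmentIn x y S) :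
    InjOn (dist x) S := by
  obtain ⟨a, b, hab, α, hd, rfl, rfl, rfl⟩ := hS
  rintro _ ⟨s, hs, rfl⟩ _ ⟨t, ht, rfl⟩ hst
  rw [hd a ⟨le_rfl, hab⟩ s hs, hd a ⟨le_rfl, hab⟩ t ht, abs_of_nonpos (by linarith [hs.1]),
    abs_of_nonpos (by linarith [ht.1])] at hst
  rw [show s = t by linarith]

end Arcs

namespace IsRTree

variable {T : Type*} [MetricSpace T] (h : IsRTree T)

noncomputable def seg (x y : T) : Set T :=
  (h x y).1.exists.choose

theorem seg_isArcIn (x y : T) : IsArcIn x y (h.seg x y) :=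
  (h x y).1.exists.choose_spec

theorem eq_seg {x y : T} {S : Set T} (hS : IsArcIn x y S) : S = h.seg x y :=
  (h x y).1.unique hS (h.seg_isArcIn x y)

theorem dist_add_dist_of_mem_seg {x y z : T} (hz : z ∈ h.seg x y) :
    dist x z + dist z y = dist x y :=
  ((h x y).2 _ (h.seg_isArcIn x y)).dist_add_dist hz

theorem injOn_dist_seg (x y : T) : InjOn (dist x) (h.seg x y) :=
  ((h x y).2 _ (h.seg_isArcIn x y)).injOn_dist

theorem left_mem_seg (x y : T) : x ∈ h.seg x y := by
  obtain ⟨a, b, hab, α, -, -, hα, rfl, -⟩ := h.seg_isArcIn x y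
  exact hα ▸ mem_image_of_mem α ⟨le_rfl, hab⟩

theorem right_mem_seg (x y : T) : y ∈ h.seg x y := by
  obtain ⟨a, b, hab, α, -, -, hα, -, rfl⟩ := h.seg_isArcIn x y
  exact hα ▸ mem_image_of_mem α ⟨hab, le_rfl⟩

theorem isCompact_seg (x y : T) : IsCompact (h.seg x y) := by
  obtain ⟨a, b, -, α, hc, -, hα, -, -⟩ := h.seg_isArcIn x y
  exact hα ▸ isCompact_Icc.image_of_continuousOn hc

theorem isConnected_seg (x y : T) : IsConnected (h.seg x y) := by
  obtain ⟨a, b, hab, α, hc, -, hα, -, -⟩ := h.seg_isArcIn x y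
  exact hα ▸ (isConnected_Icc hab).image α hc

theorem seg_left_subset {x y z : T} (hz : z ∈ h.seg x y) : h.seg x z ⊆ h.seg x y := by
  obtain ⟨a, b, hab, α, hc, hi, hα, rfl, rfl⟩ := h.seg_isArcIn x y
  rw [← hα] at hz ⊢
  obtain ⟨t, ht, rfl⟩ := hz
  rw [← h.eq_seg (IsArcIn.subarc hc hi ht.1 le_rfl ht.2)]
  exact image_mono (Icc_subset_Icc le_rfl ht.2)

theorem seg_right_subset {x y z : T} (hz : z ∈ h.seg x y) : h.seg z y ⊆ h.seg x y := by
  obtain ⟨a, b, hab, α, hc, hi, hα, rfl, rfl⟩ := h.seg_isArcIn x y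
  rw [← hα] at hz ⊢
  obtain ⟨t, ht, rfl⟩ := hz
  rw [← h.eq_seg (IsArcIn.subarc hc hi ht.2 ht.1 le_rfl)]
  exact image_mono (Icc_subset_Icc ht.1 le_rfl)

/-- The branch point `p` is the first point of `[u, w]` (seen from `u`) that lies on `[w, v]`. -/
theorem exists_seg_eq_union (u w v : T) :
    ∃ p ∈ h.seg u w, p ∈ h.seg w v ∧ h.seg u v = h.seg u p ∪ h.seg p v := by
  obtain ⟨a, b, hab, α, hc, hi, hα, rfl, rfl⟩ := h.seg_isArcIn u w
  set K := h.seg (α b) v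
  set E := Icc a b ∩ α ⁻¹' K
  have hE : IsClosed E :=
    hc.preimage_isClosed_of_isClosed isClosed_Icc (h.isCompact_seg _ v).isClosed
  have hbE : b ∈ E := ⟨⟨hab, le_rfl⟩, h.left_mem_seg _ v⟩
  have hbdd : BddBelow E := ⟨a, fun t ht => ht.1.1⟩
  set t₀ := sInf E
  have ht₀ : t₀ ∈ E := hE.csInf_mem ⟨b, hbE⟩ hbdd
  have hp : h.seg (α a) (α t₀) = α '' Icc a t₀ :=
    (h.eq_seg (IsArcIn.subarc hc hi ht₀.1.1 le_rfl ht₀.1.2)).symm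
  refine ⟨α t₀, hα ▸ mem_image_of_mem α ht₀.1, ht₀.2, h.eq_seg ?_ |>.symm⟩
  refine (h.seg_isArcIn _ _).union (h.seg_isArcIn _ _) fun q ⟨hq, hqv⟩ => ?_
  rw [hp] at hq
  obtain ⟨t, ht, rfl⟩ := hq
  have htE : t ∈ E := ⟨⟨ht.1, ht.2.trans ht₀.1.2⟩, h.seg_right_subset ht₀.2 hqv⟩
  rw [le_antisymm ht.2 (csInf_le hbdd htE)]
  rfl

theorem seg_subset_union (u w v : T) : h.seg u v ⊆ h.seg u w ∪ h.seg w v := by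
  obtain ⟨p, hpu, hpv, heq⟩ := h.exists_seg_eq_union u w v
  exact heq ▸ union_subset_union (h.seg_left_subset hpu) (h.seg_right_subset hpv)

theorem mem_seg_iff_of_dist_lt {x z w p : T} (hzw : dist z w < dist z p) :
    p ∈ h.seg x z ↔ p ∈ h.seg x w := by
  constructor
  · intro hp
    refine (h.seg_subset_union x w z hp).resolve_right fun hp' => ?_
    have := h.dist_add_dist_of_mem_seg hp'
    linarith [dist_nonneg (x := w) (y := p), dist_comm w z, dist_comm p z]
  · intro hp
    refine (h.seg_subset_union x z w hp).resolve_right fun hp' => ?_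
    have := h.dist_add_dist_of_mem_seg hp'
    linarith [dist_nonneg (x := p) (y := w)]

/-- A point `p` of `[x, y]` outside `C` would split `C` into the open pieces
`{z | p ∈ [x, z]}` and `{z | p ∉ [x, z]}`. -/
theorem seg_subset_of_isPreconnected {C : Set T} (hC : IsPreconnected C) {x y : T}
    (hx : x ∈ C) (hy : y ∈ C) : h.seg x y ⊆ C := by
  intro p hp
  by_contra hpC
  have hpos : ∀ z ∈ C, 0 < dist z p := fun z hz => dist_pos.2 fun hzp => hpC (hzp ▸ hz)
  have hopen : ∀ P : Prop, IsOpen {z | z ≠ p ∧ (p ∈ h.seg x z ↔ P)} := by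
    intro P
    refine Metric.isOpen_iff.2 fun z ⟨hzp, hz⟩ => ⟨dist z p, dist_pos.2 hzp, fun w hw => ?_⟩
    rw [mem_ball, dist_comm] at hw
    refine ⟨fun hwp => (lt_irrefl _) (hwp ▸ hw), ?_⟩
    rw [← h.mem_seg_iff_of_dist_lt hw, hz]
  have hpx : p ∉ h.seg x x := fun hpx => by
    have := h.dist_add_dist_of_mem_seg hpx
    linarith [hpos x hx, dist_comm x p, dist_self x]
  obtain ⟨q, -, ⟨-, hqx⟩, ⟨-, hqy⟩⟩ := hC _ _ (hopen False) (hopen True)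
    (fun z hz => by by_cases hpz : p ∈ h.seg x z <;> simp [hpz, dist_pos.1 (hpos z hz)])
    ⟨x, hx, dist_pos.1 (hpos x hx), iff_false_intro hpx⟩
    ⟨y, hy, dist_pos.1 (hpos y hy), iff_true_intro hp⟩
  exact hqx.1 (hqy.2 trivial)

theorem exists_mem_seg_ne {x y : T} (hxy : x ≠ y) : ∃ m ∈ h.seg x y, m ≠ x ∧ m ≠ y := by
  have hd : 0 < dist x y := dist_pos.2 hxy
  have hcont : ContinuousOn (dist x) (h.seg x y) :=
    (continuous_const.dist continuous_id).continuousOn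
  obtain ⟨m, hm, hxm⟩ := (h.isConnected_seg x y).isPreconnected.intermediate_value
    (h.left_mem_seg x y) (h.right_mem_seg x y) hcont
    (show dist x y / 2 ∈ Icc (dist x x) (dist x y) by rw [dist_self]; constructor <;> linarith)
  refine ⟨m, hm, fun hmx => ?_, fun hmy => ?_⟩
  · rw [hmx, dist_self] at hxm; linarith
  · rw [hmy] at hxm; linarith

theorem image_seg {f : T → T} (hf : Isometry f) (x y : T) :
    f '' h.seg x y = h.seg (f x) (f y) := by
  obtain ⟨a, b, hab, α, hc, hi, hα, hαa, hαb⟩ := h.seg_isArcIn x y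
  refine h.eq_seg ⟨a, b, hab, f ∘ α, hf.continuous.comp_continuousOn hc,
    hf.injective.comp_injOn hi, by rw [image_comp, hα], by simp [hαa], by simp [hαb]⟩

theorem apply_eq_self_of_mem_seg {f : T → T} (hf : Isometry f) {x y z : T} (hx : f x = x)
    (hy : f y = y) (hz : z ∈ h.seg x y) : f z = z := by
  have hfz : f z ∈ h.seg x y := by
    rw [← hx, ← hy, ← h.image_seg hf]; exact mem_image_of_mem f hz
  refine h.injOn_dist_seg x y hfz hz ?_
  rw [← hf.dist_eq x z, hx]

end IsRTree

section Stable

variable {G T : Type*} [Group G] [MetricSpace T] {ρ : G →* (T ≃ᵢ T)}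

theorem fixOf_anti_s14 {S S' : Set T} (hSS' : S ⊆ S') : fixOf ρ S' ⊆ fixOf ρ S :=
  fun _ hg x hx => hg x (hSS' hx)

theorem IsStableSubtree.mem_fixOf_of_fixes (h : IsRTree T) {A : Set T}
    (hA : IsStableSubtree ρ A) {x y : T} (hx : x ∈ A) (hy : y ∈ A) (hxy : x ≠ y) {g : G}
    (hgx : ρ g x = x) (hgy : ρ g y = y) : g ∈ fixOf ρ A := by
  have hg : g ∈ fixOf ρ (h.seg x y) := fun z hz =>
    h.apply_eq_self_of_mem_seg (ρ g).isometry hgx hgy hz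
  rwa [hA.2.2 _ (h.seg_subset_of_isPreconnected hA.1.isPreconnected hx hy)
    (h.isConnected_seg x y) ⟨x, h.left_mem_seg x y, y, h.right_mem_seg x y, hxy⟩] at hg

theorem IsStableSubtree.mem_fixOf_or_mem_fixOf (h : IsRTree T) {A B : Set T}
    (hA : IsStableSubtree ρ A) (hB : IsStableSubtree ρ B) (hAB : IsPreconnected (A ∪ B))
    {x y : T} (hx : x ∈ A) (hy : y ∈ B) (hxy : x ≠ y) {g : G}
    (hgx : ρ g x = x) (hgy : ρ g y = y) : g ∈ fixOf ρ A ∨ g ∈ fixOf ρ B := by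
  obtain ⟨m, hm, hmx, hmy⟩ := h.exists_mem_seg_ne hxy
  have hgm : ρ g m = m := h.apply_eq_self_of_mem_seg (ρ g).isometry hgx hgy hm
  rcases h.seg_subset_of_isPreconnected hAB (Or.inl hx) (Or.inr hy) hm with hmA | hmB
  · exact Or.inl (hA.mem_fixOf_of_fixes h hx hmA hmx.symm hgx hgm)
  · exact Or.inr (hB.mem_fixOf_of_fixes h hmB hy hmy hgm hgy)

theorem isStableSubtree_sUnion (h : IsRTree T) {S : Set T} {𝒜 : Set (Set T)}
    (h𝒜 : ∀ A ∈ 𝒜, IsStableSubtree ρ A) (hS𝒜 : ∀ A ∈ 𝒜, S ⊆ A) (hS : S ∈ 𝒜) :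
    IsStableSubtree ρ (⋃₀ 𝒜) := by
  obtain ⟨hSc, ⟨s, hs, s', hs', hss'⟩, -⟩ := h𝒜 S hS
  have hfix : ∀ A ∈ 𝒜, fixOf ρ A = fixOf ρ S := fun A hA =>
    ((h𝒜 A hA).2.2 S (hS𝒜 A hA) hSc ⟨s, hs, s', hs', hss'⟩).symm
  have hfixM : fixOf ρ (⋃₀ 𝒜) = fixOf ρ S := by
    refine (fixOf_anti_s14 (subset_sUnion_of_mem hS)).antisymm fun g hg z ⟨A, hA, hz⟩ => ?_
    exact (hfix A hA ▸ hg) z hz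
  refine ⟨⟨⟨s, S, hS, hs⟩, isPreconnected_sUnion s 𝒜 (fun A hA => hS𝒜 A hA hs)
      fun A hA => (h𝒜 A hA).1.isPreconnected⟩,
    ⟨s, ⟨S, hS, hs⟩, s', ⟨S, hS, hs'⟩, hss'⟩, fun S' hS' _ ⟨x, hx, y, hy, hxy⟩ => ?_⟩
  refine Subset.antisymm (fun g hg => ?_) (fixOf_anti_s14 hS')
  obtain ⟨A, hA, hxA⟩ := hS' hx
  obtain ⟨B, hB, hyB⟩ := hS' hy
  have hAB : IsPreconnected (A ∪ B) := .union s (hS𝒜 A hA hs) (hS𝒜 B hB hs)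
    (h𝒜 A hA).1.isPreconnected (h𝒜 B hB).1.isPreconnected
  rw [hfixM]
  rcases (h𝒜 A hA).mem_fixOf_or_mem_fixOf h (h𝒜 B hB) hAB hxA hyB hxy (hg x hx) (hg y hy)
    with hgA | hgB
  · exact hfix A hA ▸ hgA
  · exact hfix B hB ▸ hgB

end Stable

/-- Every stable subtree of an ℝ-tree is contained in a unique maximal stable subtree. -/
theorem stable_subtree_subset_unique_maximal {T : Type*} [MetricSpace T] (h : IsRTree T)
    {G : Type*} [Group G] (ρ : G →* (T ≃ᵢ T)) (S : Set T)
    (hS : IsStableSubtree ρ S) :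
    ∃! M : Set T, IsStableSubtree ρ M ∧ S ⊆ M ∧
      ∀ M' : Set T, IsStableSubtree ρ M' → M ⊆ M' → M' = M := by
  set 𝒜 : Set (Set T) := {A | IsStableSubtree ρ A ∧ S ⊆ A}
  have hS𝒜 : S ∈ 𝒜 := ⟨hS, subset_rfl⟩
  have hM : IsStableSubtree ρ (⋃₀ 𝒜) :=
    isStableSubtree_sUnion h (fun A hA => hA.1) (fun A hA => hA.2) hS𝒜
  have hSM : S ⊆ ⋃₀ 𝒜 := subset_sUnion_of_mem hS𝒜
  refine ⟨⋃₀ 𝒜, ⟨hM, hSM, fun M' hM' hMM' => ?_⟩, fun N ⟨hN, hSN, hNmax⟩ => ?_⟩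
  · exact (subset_sUnion_of_mem (show M' ∈ 𝒜 from ⟨hM', hSM.trans hMM'⟩)).antisymm
      hMM'
  · exact (hNmax _ hM (subset_sUnion_of_mem (show N ∈ 𝒜 from ⟨hN, hSN⟩))).symm
end
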